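/- arXiv:2604.27042 — 5 statements merged into one kernel-verified Lean document; each statement's English description precedes it below -/
import Mathlib

section
/- For a classical–quantum state ρ_XB = Σ_x r(x)|x⟩⟨x| ⊗ ρ_B^x and positive semidefinite σ_XB = Σ_x s(x)|x⟩⟨x| ⊗ σ_B^x, the relative entropy variance satisfies V(ρ_XB‖σ_XB) = Σ_x r(x) V(ρ_B^x‖σ_B^x) + Var[W], where W is the real random variable taking value log(r(x)/s(x)) + D(ρ_B^x‖σ_B^x) with probability r(x), D(ρ‖σ) := Tr[ρ(log ρ − log σ)], and V(ρ‖σ) := Tr[ρ(log ρ − log σ − D(ρ‖σ))²]. -/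
open Matrix Kronecker BigOperators
open scoped ComplexOrder

/-- Matrix logarithm (base 2) of a Hermitian matrix via spectral decomposition;
zero eigenvalues contribute `log 0 = 0`, i.e. the logarithm is taken on the support.
Returns `0` on non-Hermitian inputs. -/
noncomputable def matLog {n : Type*} [Fintype n] [DecidableEq n]
    (A : Matrix n n ℂ) : Matrix n n ℂ :=
  if hA : A.IsHermitian then
    (hA.eigenvectorUnitary : Matrix n n ℂ) *
      Matrix.diagonal (fun i => (Real.logb 2 (hA.eigenvalues i) : ℂ)) *
      (star (hA.eigenvectorUnitary : Matrix n n ℂ))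
  else 0

/-- The relative entropy `k`-th moment `M_k(ρ‖σ) = Tr[ρ (log ρ − log σ)^k]`. -/
noncomputable def relMoment {n : Type*} [Fintype n] [DecidableEq n]
    (k : ℕ) (ρ σ : Matrix n n ℂ) : ℂ :=
  (ρ * (matLog ρ - matLog σ) ^ k).trace

/-- The Umegaki relative entropy `D(ρ‖σ) = Tr[ρ(log ρ − log σ)]` (real part). -/
noncomputable def relEntropy {n : Type*} [Fintype n] [DecidableEq n]
    (ρ σ : Matrix n n ℂ) : ℝ :=
  (relMoment 1 ρ σ).re

/-- The relative entropy variance `V(ρ‖σ) = Tr[ρ(log ρ − log σ − D(ρ‖σ))²]`. -/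
noncomputable def relVar {n : Type*} [Fintype n] [DecidableEq n]
    (ρ σ : Matrix n n ℂ) : ℂ :=
  (ρ * ((matLog ρ - matLog σ) - (relEntropy ρ σ : ℂ) • (1 : Matrix n n ℂ)) ^ 2).trace

section CQHelpers
open Polynomial

namespace CQAux

variable {n : Type*} [Fintype n] [DecidableEq n]

lemma aeval_diagonal (p : ℂ[X]) (d : n → ℂ) :
    aeval (Matrix.diagonal d) p = Matrix.diagonal (fun i => p.eval (d i)) := by
  induction p using Polynomial.induction_on' with
  | add p q hp hq =>
      simp [map_add, hp, hq, Matrix.diagonal_add, Polynomial.eval_add]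
  | monomial k a =>
      simp only [aeval_monomial, Polynomial.eval_monomial]
      rw [Matrix.diagonal_pow]
      simp [Matrix.algebraMap_eq_diagonal, Matrix.diagonal_mul_diagonal]

lemma conj_pow (u d : Matrix n n ℂ) (h1 : star u * u = 1) (h2 : u * star u = 1) (k : ℕ) :
    (u * d * star u) ^ k = u * d ^ k * star u := by
  induction k with
  | zero => simp [h2]
  | succ k ih =>
      rw [pow_succ, pow_succ, ih]
      calc u * d ^ k * star u * (u * d * star u)
          = u * d ^ k * ((star u * u) * (d * star u)) := by
            simp only [Matrix.mul_assoc]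
        _ = u * (d ^ k * d) * star u := by rw [h1]; simp only [Matrix.one_mul, Matrix.mul_assoc]

lemma aeval_conj (u d : Matrix n n ℂ) (h1 : star u * u = 1) (h2 : u * star u = 1) (p : ℂ[X]) :
    aeval (u * d * star u) p = u * aeval d p * star u := by
  induction p using Polynomial.induction_on' with
  | add p q hp hq =>
      rw [map_add, map_add, hp, hq, Matrix.mul_add, Matrix.add_mul]
  | monomial k a =>
      rw [aeval_monomial, aeval_monomial, conj_pow u d h1 h2 k]
      rw [Algebra.algebraMap_eq_smul_one]
      simp only [smul_mul_assoc, Matrix.one_mul, mul_smul_comm]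

lemma conj_diag_welldef (f : ℝ → ℝ) (u v : Matrix n n ℂ)
    (hu1 : star u * u = 1) (hu2 : u * star u = 1)
    (hv1 : star v * v = 1) (hv2 : v * star v = 1)
    (lam mu : n → ℝ)
    (h : u * Matrix.diagonal (fun i => (lam i : ℂ)) * star u
       = v * Matrix.diagonal (fun i => (mu i : ℂ)) * star v) :
    u * Matrix.diagonal (fun i => (f (lam i) : ℂ)) * star u
      = v * Matrix.diagonal (fun i => (f (mu i) : ℂ)) * star v := by
  classical
  set S : Finset ℝ := Finset.image lam Finset.univ ∪ Finset.image mu Finset.univ with hS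
  set p : ℝ[X] := Lagrange.interpolate S id f with hpdef
  have hp : ∀ t ∈ S, p.eval t = f t := fun t ht =>
    Lagrange.eval_interpolate_at_node f (Set.injOn_id _) ht
  set q : ℂ[X] := p.map (algebraMap ℝ ℂ) with hqdef
  have hq : ∀ t : ℝ, t ∈ S → q.eval (t : ℂ) = (f t : ℂ) := by
    intro t ht
    rw [hqdef, Polynomial.eval_map]
    have h2 := Polynomial.eval₂_hom (algebraMap ℝ ℂ) t (p := p)
    simp only [Complex.coe_algebraMap] at h2
    rw [h2, hp t ht]
  have key : ∀ (w : Matrix n n ℂ) (lam' : n → ℝ), (∀ i, lam' i ∈ S) →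
      (hw1 : star w * w = 1) → (hw2 : w * star w = 1) →
      aeval (w * Matrix.diagonal (fun i => (lam' i : ℂ)) * star w) q
        = w * Matrix.diagonal (fun i => (f (lam' i) : ℂ)) * star w := by
    intro w lam' hmem hw1 hw2
    rw [aeval_conj _ _ hw1 hw2, aeval_diagonal]
    have he : (fun i => q.eval ((lam' i : ℝ) : ℂ)) = fun i => ((f (lam' i) : ℝ) : ℂ) :=
      funext fun i => hq _ (hmem i)
    rw [he]
  have hmu : ∀ i, lam i ∈ S := fun i =>
    Finset.mem_union_left _ (Finset.mem_image_of_mem lam (Finset.mem_univ i))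
  have hmv : ∀ i, mu i ∈ S := fun i =>
    Finset.mem_union_right _ (Finset.mem_image_of_mem mu (Finset.mem_univ i))
  rw [← key u lam hmu hu1 hu2, ← key v mu hmv hv1 hv2, h]


lemma matLog_eq_of (A : Matrix n n ℂ) (hA : A.IsHermitian)
    (v : Matrix n n ℂ) (hv1 : star v * v = 1) (hv2 : v * star v = 1)
    (mu : n → ℝ)
    (hdec : A = v * Matrix.diagonal (fun i => (mu i : ℂ)) * star v) :
    matLog A = v * Matrix.diagonal (fun i => (Real.logb 2 (mu i) : ℂ)) * star v := by
  rw [matLog, dif_pos hA]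
  have hu1 : star (hA.eigenvectorUnitary : Matrix n n ℂ) * (hA.eigenvectorUnitary : Matrix n n ℂ) = 1 :=
    (Matrix.IsHermitian.eigenvectorUnitary hA).2.1
  have hu2 : (hA.eigenvectorUnitary : Matrix n n ℂ) * star (hA.eigenvectorUnitary : Matrix n n ℂ) = 1 :=
    (Matrix.IsHermitian.eigenvectorUnitary hA).2.2
  have hspec : (hA.eigenvectorUnitary : Matrix n n ℂ) *
      Matrix.diagonal (fun i => ((hA.eigenvalues i : ℝ) : ℂ)) *
      star (hA.eigenvectorUnitary : Matrix n n ℂ)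
      = v * Matrix.diagonal (fun i => (mu i : ℂ)) * star v := by
    rw [← hdec]
    exact hA.spectral_theorem.symm
  exact conj_diag_welldef (Real.logb 2) _ v hu1 hu2 hv1 hv2 _ _ hspec



variable {n : Type*} [Fintype n] [DecidableEq n]

lemma conj_diag_mul (u : Matrix n n ℂ) (h1 : star u * u = 1) (d1 d2 : n → ℂ) :
    (u * Matrix.diagonal d1 * star u) * (u * Matrix.diagonal d2 * star u)
      = u * Matrix.diagonal (fun i => d1 i * d2 i) * star u := by
  calc (u * Matrix.diagonal d1 * star u) * (u * Matrix.diagonal d2 * star u)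
      = u * Matrix.diagonal d1 * ((star u * u) * (Matrix.diagonal d2 * star u)) := by
        simp only [Matrix.mul_assoc]
    _ = u * (Matrix.diagonal d1 * Matrix.diagonal d2) * star u := by
        rw [h1]; simp only [Matrix.one_mul, Matrix.mul_assoc]
    _ = u * Matrix.diagonal (fun i => d1 i * d2 i) * star u := by
        rw [Matrix.diagonal_mul_diagonal]

lemma conj_diag_isHermitian (u : Matrix n n ℂ) (d : n → ℝ) :
    (u * Matrix.diagonal (fun i => (d i : ℂ)) * star u).IsHermitian := by
  unfold Matrix.IsHermitian
  rw [Matrix.conjTranspose_mul, Matrix.conjTranspose_mul, Matrix.diagonal_conjTranspose]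
  have : star (fun i => (d i : ℂ)) = fun i => (d i : ℂ) := by
    funext i; simp [Pi.star_apply, Complex.conj_ofReal]
  rw [this]
  simp only [Matrix.star_eq_conjTranspose, Matrix.conjTranspose_conjTranspose, Matrix.mul_assoc]

lemma trace_quad (ρ M G : Matrix n n ℂ) (τ : ℂ) (hG1 : ρ * G = τ • ρ) (hG2 : G * ρ = τ • ρ)
    (htr : ρ.trace = 1) :
    (ρ * (M + G) ^ 2).trace = (ρ * M * M).trace + 2 * τ * (ρ * M).trace + τ ^ 2 := by
  have expand : ρ * (M + G) ^ 2 = ρ * M * M + (ρ * M) * G + τ • (ρ * M) + (τ * τ) • ρ := by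
    have h0 : ρ * (M + G) = ρ * M + τ • ρ := by rw [Matrix.mul_add, hG1]
    rw [sq, ← Matrix.mul_assoc, h0, Matrix.add_mul, Matrix.smul_mul, h0, smul_add, smul_smul,
      Matrix.mul_add]
    abel
  have h3 : ((ρ * M) * G).trace = τ * (ρ * M).trace := by
    rw [Matrix.trace_mul_comm, ← Matrix.mul_assoc, hG2, Matrix.smul_mul, Matrix.trace_smul,
      Matrix.trace_mul_comm]
    simp
  rw [expand, Matrix.trace_add, Matrix.trace_add, Matrix.trace_add, Matrix.trace_smul,
    Matrix.trace_smul, h3, htr]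
  simp only [smul_eq_mul, mul_one]
  ring

lemma conj_diag_sub (u : Matrix n n ℂ) (d1 d2 : n → ℂ) :
    u * Matrix.diagonal d1 * star u - u * Matrix.diagonal d2 * star u
      = u * Matrix.diagonal (fun i => d1 i - d2 i) * star u := by
  rw [← Matrix.sub_mul, ← Matrix.mul_sub]
  congr 2
  ext i j
  by_cases h : i = j <;> simp [Matrix.diagonal_apply, h]

lemma block_key {B : Type*} [Fintype B] [DecidableEq B]
    (rx sx D0 : ℝ) (hrx : 0 < rx) (hsx : 0 < sx)
    (ρx σx u w : Matrix B B ℂ) (lam mu : B → ℝ)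
    (hu1 : star u * u = 1) (hu2 : u * star u = 1)
    (hw1 : star w * w = 1) (hw2 : w * star w = 1)
    (hρdec : ρx = u * Matrix.diagonal (fun b => (lam b : ℂ)) * star u)
    (hσdec : σx = w * Matrix.diagonal (fun b => (mu b : ℂ)) * star w)
    (hρtrx : ρx.trace = 1)
    (hsuppx : ∀ v : B → ℂ, σx.mulVec v = 0 → ρx.mulVec v = 0) :
    ((ρx * ((u * Matrix.diagonal (fun b => ((Real.logb 2 (rx * lam b) : ℝ) : ℂ)) * star u)
        - (w * Matrix.diagonal (fun b => ((Real.logb 2 (sx * mu b) : ℝ) : ℂ)) * star w))).trace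
      = ((Real.logb 2 rx - Real.logb 2 sx + relEntropy ρx σx : ℝ) : ℂ))
    ∧ ((ρx * ((u * Matrix.diagonal (fun b => ((Real.logb 2 (rx * lam b) : ℝ) : ℂ)) * star u)
        - (w * Matrix.diagonal (fun b => ((Real.logb 2 (sx * mu b) : ℝ) : ℂ)) * star w)
        - (D0 : ℂ) • (1 : Matrix B B ℂ)) ^ 2).trace
      = relVar ρx σx
        + (((Real.logb 2 rx - Real.logb 2 sx + relEntropy ρx σx - D0 : ℝ) : ℂ)) ^ 2) := by
  classical
  set α : ℝ := Real.logb 2 rx with hα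
  set β : ℝ := Real.logb 2 sx with hβ
  set d : ℝ := relEntropy ρx σx with hd
  set Pρ : Matrix B B ℂ :=
    u * Matrix.diagonal (fun b => (((if lam b = 0 then (0:ℝ) else 1) : ℝ) : ℂ)) * star u with hPρdef
  set Pσ : Matrix B B ℂ :=
    w * Matrix.diagonal (fun b => (((if mu b = 0 then (0:ℝ) else 1) : ℝ) : ℂ)) * star w with hPσdef
  have hρH : ρx.IsHermitian := hρdec ▸ conj_diag_isHermitian u lam
  have hσH : σx.IsHermitian := hσdec ▸ conj_diag_isHermitian w mu
  have hmlρ : matLog ρx = u * Matrix.diagonal (fun b => ((Real.logb 2 (lam b) : ℝ) : ℂ)) * star u :=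
    matLog_eq_of ρx hρH u hu1 hu2 lam hρdec
  have hmlσ : matLog σx = w * Matrix.diagonal (fun b => ((Real.logb 2 (mu b) : ℝ) : ℂ)) * star w :=
    matLog_eq_of σx hσH w hw1 hw2 mu hσdec
  set M : Matrix B B ℂ := matLog ρx - matLog σx with hM
  have hMH : M.IsHermitian := by
    rw [hM, hmlρ, hmlσ]
    exact (conj_diag_isHermitian u _).sub (conj_diag_isHermitian w _)
  -- splitting of the scaled logs
  have hLρ : u * Matrix.diagonal (fun b => ((Real.logb 2 (rx * lam b) : ℝ) : ℂ)) * star u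
      = matLog ρx + (α : ℂ) • Pρ := by
    have hsplit : Matrix.diagonal (fun b => ((Real.logb 2 (rx * lam b) : ℝ) : ℂ))
        = Matrix.diagonal (fun b => ((Real.logb 2 (lam b) : ℝ) : ℂ))
          + (α : ℂ) • Matrix.diagonal (fun b => (((if lam b = 0 then (0:ℝ) else 1) : ℝ) : ℂ)) := by
      rw [← Matrix.diagonal_smul, Matrix.diagonal_add]
      refine congrArg Matrix.diagonal (funext fun b => ?_)
      by_cases hb : lam b = 0
      · simp [hb, Real.logb_zero, Pi.smul_apply]
      · simp only [Pi.smul_apply, smul_eq_mul, if_neg hb]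
        rw [Real.logb_mul (ne_of_gt hrx) hb]
        push_cast
        ring
    rw [hsplit, Matrix.mul_add, Matrix.add_mul, Matrix.mul_smul, Matrix.smul_mul, hmlρ, hPρdef]
  have hLσ : w * Matrix.diagonal (fun b => ((Real.logb 2 (sx * mu b) : ℝ) : ℂ)) * star w
      = matLog σx + (β : ℂ) • Pσ := by
    have hsplit : Matrix.diagonal (fun b => ((Real.logb 2 (sx * mu b) : ℝ) : ℂ))
        = Matrix.diagonal (fun b => ((Real.logb 2 (mu b) : ℝ) : ℂ))
          + (β : ℂ) • Matrix.diagonal (fun b => (((if mu b = 0 then (0:ℝ) else 1) : ℝ) : ℂ)) := by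
      rw [← Matrix.diagonal_smul, Matrix.diagonal_add]
      refine congrArg Matrix.diagonal (funext fun b => ?_)
      by_cases hb : mu b = 0
      · simp [hb, Real.logb_zero, Pi.smul_apply]
      · simp only [Pi.smul_apply, smul_eq_mul, if_neg hb]
        rw [Real.logb_mul (ne_of_gt hsx) hb]
        push_cast
        ring
    rw [hsplit, Matrix.mul_add, Matrix.add_mul, Matrix.mul_smul, Matrix.smul_mul, hmlσ, hPσdef]
  -- projection absorption
  have habs : (fun b => ((lam b : ℝ) : ℂ) * (((if lam b = 0 then (0:ℝ) else 1) : ℝ) : ℂ))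
      = fun b => ((lam b : ℝ) : ℂ) := by
    funext b
    by_cases hb : lam b = 0 <;> simp [hb]
  have habs' : (fun b => (((if lam b = 0 then (0:ℝ) else 1) : ℝ) : ℂ) * ((lam b : ℝ) : ℂ))
      = fun b => ((lam b : ℝ) : ℂ) := by
    funext b
    by_cases hb : lam b = 0 <;> simp [hb]
  have hPρ1 : ρx * Pρ = ρx := by
    rw [hρdec, hPρdef, conj_diag_mul u hu1, habs]
  have hPρ2 : Pρ * ρx = ρx := by
    rw [hρdec, hPρdef, conj_diag_mul u hu1, habs']
  have hone : (1 : Matrix B B ℂ) = w * Matrix.diagonal (fun _ => (1:ℂ)) * star w := by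
    rw [Matrix.diagonal_one, Matrix.mul_one, hw2]
  have hN : σx * ((1 : Matrix B B ℂ) - Pσ) = 0 := by
    rw [hone, hPσdef, conj_diag_sub, hσdec, conj_diag_mul w hw1]
    have : (fun b => (mu b : ℂ) * ((1:ℂ) - (((if mu b = 0 then (0:ℝ) else 1) : ℝ) : ℂ)))
        = fun _ => (0:ℂ) := by
      funext b
      by_cases hb : mu b = 0 <;> simp [hb]
    rw [this, Matrix.diagonal_zero, Matrix.mul_zero, Matrix.zero_mul]
  have hcols : ρx * ((1 : Matrix B B ℂ) - Pσ) = 0 := by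
    ext i j
    have hv : σx.mulVec (fun k => ((1 : Matrix B B ℂ) - Pσ) k j) = 0 := by
      funext i'
      have h0 := congrFun (congrFun hN i') j
      simpa [Matrix.mul_apply, Matrix.mulVec, dotProduct] using h0
    have h1 := congrFun (hsuppx _ hv) i
    simpa [Matrix.mul_apply, Matrix.mulVec, dotProduct] using h1
  have hPσ1 : ρx * Pσ = ρx := by
    have h2 : ρx * 1 - ρx * Pσ = 0 := by rw [← Matrix.mul_sub, hcols]
    rw [Matrix.mul_one] at h2
    exact (sub_eq_zero.mp h2).symm
  have hPσH : Pσ.IsHermitian := hPσdef ▸ conj_diag_isHermitian w _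
  have hPσ2 : Pσ * ρx = ρx := by
    have h3 := congrArg Matrix.conjTranspose hPσ1
    rw [Matrix.conjTranspose_mul, hPσH.eq, hρH.eq] at h3
    exact h3
  -- trace of ρ * M is real and equals relEntropy
  have hc1 : (ρx * M).trace = ((d : ℝ) : ℂ) := by
    have hstar : (starRingEnd ℂ) ((ρx * M).trace) = (ρx * M).trace := by
      rw [← Complex.star_def, ← Matrix.trace_conjTranspose, Matrix.conjTranspose_mul, hMH.eq,
        hρH.eq, Matrix.trace_mul_comm]
    have hre : (((ρx * M).trace.re : ℝ) : ℂ) = (ρx * M).trace :=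
      Complex.conj_eq_iff_re.mp hstar
    have hdd : d = ((ρx * M).trace).re := by
      rw [hd, relEntropy, relMoment, pow_one, ← hM]
    rw [hdd, hre]
  have hrelVar : relVar ρx σx = (ρx * M * M).trace - ((d : ℝ) : ℂ) ^ 2 := by
    have hsub : M - ((d : ℝ) : ℂ) • (1 : Matrix B B ℂ) = M + ((-d : ℝ) : ℂ) • 1 := by
      push_cast
      rw [sub_eq_add_neg, neg_smul]
    have h4 : relVar ρx σx = (ρx * (M + ((-d : ℝ) : ℂ) • (1 : Matrix B B ℂ)) ^ 2).trace := by
      rw [relVar, ← hM, ← hd, hsub]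
    rw [h4, trace_quad ρx M _ ((-d : ℝ) : ℂ)
      (by rw [Matrix.mul_smul, Matrix.mul_one])
      (by rw [Matrix.smul_mul, Matrix.one_mul]) hρtrx, hc1]
    push_cast
    ring
  constructor
  · -- moment
    rw [hLρ, hLσ]
    have hKG : (matLog ρx + (α : ℂ) • Pρ) - (matLog σx + (β : ℂ) • Pσ)
        = M + ((α : ℂ) • Pρ - (β : ℂ) • Pσ) := by
      rw [hM]
      module
    have hG01 : ρx * ((α : ℂ) • Pρ - (β : ℂ) • Pσ) = ((α - β : ℝ) : ℂ) • ρx := by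
      rw [Matrix.mul_sub, Matrix.mul_smul, Matrix.mul_smul, hPρ1, hPσ1, ← sub_smul]
      norm_cast
    rw [hKG, Matrix.mul_add, Matrix.trace_add, hG01, Matrix.trace_smul, hc1, hρtrx]
    push_cast
    simp only [smul_eq_mul, mul_one]
    ring
  · -- variance
    rw [hLρ, hLσ]
    have hKG : (matLog ρx + (α : ℂ) • Pρ) - (matLog σx + (β : ℂ) • Pσ) - (D0 : ℂ) • 1
        = M + ((α : ℂ) • Pρ - (β : ℂ) • Pσ - (D0 : ℂ) • 1) := by
      rw [hM]
      module
    have hG1 : ρx * ((α : ℂ) • Pρ - (β : ℂ) • Pσ - (D0 : ℂ) • 1)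
        = ((α - β - D0 : ℝ) : ℂ) • ρx := by
      rw [Matrix.mul_sub, Matrix.mul_sub, Matrix.mul_smul, Matrix.mul_smul, Matrix.mul_smul,
        hPρ1, hPσ1, Matrix.mul_one, ← sub_smul, ← sub_smul]
      norm_cast
    have hG2 : ((α : ℂ) • Pρ - (β : ℂ) • Pσ - (D0 : ℂ) • 1) * ρx
        = ((α - β - D0 : ℝ) : ℂ) • ρx := by
      rw [Matrix.sub_mul, Matrix.sub_mul, Matrix.smul_mul, Matrix.smul_mul, Matrix.smul_mul,
        hPρ2, hPσ2, Matrix.one_mul, ← sub_smul, ← sub_smul]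
      norm_cast
    rw [hKG, trace_quad ρx M _ ((α - β - D0 : ℝ) : ℂ) hG1 hG2 hρtrx, hc1, hrelVar]
    push_cast
    ring


section Blocks

variable {X B : Type*} [Fintype X] [DecidableEq X] [Fintype B] [DecidableEq B]

lemma trace_reindex {m k : Type*} [Fintype m] [Fintype k] (e : m ≃ k) (M : Matrix m m ℂ) :
    (Matrix.reindex e e M).trace = M.trace := by
  simp only [Matrix.trace, Matrix.diag, Matrix.reindex_apply, Matrix.submatrix_apply]
  exact Equiv.sum_comp e.symm fun j => M j j

lemma reindex_mul {m k : Type*} [Fintype m] [Fintype k] (e : m ≃ k) (A B : Matrix m m ℂ) :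
    Matrix.reindex e e A * Matrix.reindex e e B = Matrix.reindex e e (A * B) := by
  simp only [Matrix.reindex_apply]
  exact Matrix.submatrix_mul_equiv A B _ e.symm _

lemma reindex_star {m k : Type*} [Fintype m] [Fintype k] (e : m ≃ k) (A : Matrix m m ℂ) :
    star (Matrix.reindex e e A) = Matrix.reindex e e (star A) := by
  simp only [Matrix.star_eq_conjTranspose, Matrix.reindex_apply, Matrix.conjTranspose_submatrix]

lemma cq_sum_eq (c : X → ℂ) (A : X → Matrix B B ℂ) :
    ∑ x, c x • (Matrix.single x x (1 : ℂ) ⊗ₖ A x)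
      = Matrix.reindex (Equiv.prodComm B X) (Equiv.prodComm B X)
          (Matrix.blockDiagonal fun x => c x • A x) := by
  ext ⟨x, b⟩ ⟨y, b'⟩
  simp only [Matrix.sum_apply, Matrix.smul_apply, Matrix.kroneckerMap_apply,
    Matrix.single, Matrix.of_apply, Matrix.reindex_apply, Matrix.submatrix_apply,
    Equiv.prodComm_symm, Equiv.prodComm_apply, Prod.swap_prod_mk,
    Matrix.blockDiagonal_apply, smul_eq_mul]
  by_cases hxy : x = y
  · subst hxy
    rw [Finset.sum_eq_single x]
    · simp
    · intro z _ hz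
      simp [hz]
    · simp
  · rw [Finset.sum_eq_zero, if_neg hxy]
    intro z _
    have h0 : Matrix.single z z (1 : ℂ) x y = 0 := by
      simp only [Matrix.single, Matrix.of_apply]
      rw [if_neg]
      rintro ⟨h1, h2⟩
      exact hxy (h1.symm.trans h2)
    simp [Matrix.single, Matrix.of_apply] at h0 ⊢
    tauto

lemma bd_conj_eq (u : X → Matrix B B ℂ) (g : X → B → ℝ) :
    Matrix.reindex (Equiv.prodComm B X) (Equiv.prodComm B X)
        (Matrix.blockDiagonal fun x => u x * Matrix.diagonal (fun b => ((g x b : ℝ) : ℂ))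
          * star (u x))
      = Matrix.reindex (Equiv.prodComm B X) (Equiv.prodComm B X) (Matrix.blockDiagonal u)
          * Matrix.diagonal (fun q : X × B => ((g q.1 q.2 : ℝ) : ℂ))
          * star (Matrix.reindex (Equiv.prodComm B X) (Equiv.prodComm B X)
              (Matrix.blockDiagonal u)) := by
  have hdiag : Matrix.diagonal (fun q : X × B => ((g q.1 q.2 : ℝ) : ℂ))
      = Matrix.reindex (Equiv.prodComm B X) (Equiv.prodComm B X)
          (Matrix.blockDiagonal fun x => Matrix.diagonal (fun b => ((g x b : ℝ) : ℂ))) := by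
    rw [Matrix.blockDiagonal_diagonal]
    simp only [Matrix.reindex_apply]
    rw [Matrix.submatrix_diagonal_equiv]
    rfl
  rw [hdiag, reindex_star, Matrix.star_eq_conjTranspose, Matrix.blockDiagonal_conjTranspose,
    reindex_mul, reindex_mul, Matrix.blockDiagonal_mul, Matrix.blockDiagonal_mul]
  rfl

end Blocks

section Blocks2

variable {X B : Type*} [Fintype X] [DecidableEq X] [Fintype B] [DecidableEq B]

lemma reindex_one {m k : Type*} [Fintype m] [Fintype k] [DecidableEq m] [DecidableEq k]
    (e : m ≃ k) : Matrix.reindex e e (1 : Matrix m m ℂ) = 1 := by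
  rw [Matrix.reindex_apply]
  exact Matrix.submatrix_one_equiv _

lemma reindex_sub {m k : Type*} (e : m ≃ k) (A B : Matrix m m ℂ) :
    Matrix.reindex e e A - Matrix.reindex e e B = Matrix.reindex e e (A - B) := by
  simp [Matrix.reindex_apply, Matrix.submatrix_sub]

lemma reindex_smul {m k : Type*} (e : m ≃ k) (c : ℂ) (A : Matrix m m ℂ) :
    c • Matrix.reindex e e A = Matrix.reindex e e (c • A) := by
  simp [Matrix.reindex_apply, Matrix.submatrix_smul]

lemma bd_unitary (u : X → Matrix B B ℂ) (h : ∀ x, star (u x) * u x = 1) :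
    star (Matrix.reindex (Equiv.prodComm B X) (Equiv.prodComm B X) (Matrix.blockDiagonal u))
      * Matrix.reindex (Equiv.prodComm B X) (Equiv.prodComm B X) (Matrix.blockDiagonal u)
      = 1 := by
  rw [reindex_star, Matrix.star_eq_conjTranspose, Matrix.blockDiagonal_conjTranspose,
    reindex_mul, ← Matrix.blockDiagonal_mul]
  have h2 : (fun k => (u k)ᴴ * u k) = fun _ => (1 : Matrix B B ℂ) := funext fun x => h x
  rw [h2, show (fun _ : X => (1 : Matrix B B ℂ)) = (1 : X → Matrix B B ℂ) from rfl,
    Matrix.blockDiagonal_one, reindex_one]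

lemma bd_unitary' (u : X → Matrix B B ℂ) (h : ∀ x, u x * star (u x) = 1) :
    Matrix.reindex (Equiv.prodComm B X) (Equiv.prodComm B X) (Matrix.blockDiagonal u)
      * star (Matrix.reindex (Equiv.prodComm B X) (Equiv.prodComm B X) (Matrix.blockDiagonal u))
      = 1 := by
  rw [reindex_star, Matrix.star_eq_conjTranspose, Matrix.blockDiagonal_conjTranspose,
    reindex_mul, ← Matrix.blockDiagonal_mul]
  have h2 : (fun k => u k * (u k)ᴴ) = fun _ => (1 : Matrix B B ℂ) := funext fun x => h x
  rw [h2, show (fun _ : X => (1 : Matrix B B ℂ)) = (1 : X → Matrix B B ℂ) from rfl,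
    Matrix.blockDiagonal_one, reindex_one]

lemma cq_decomp (c : X → ℝ) (A : X → Matrix B B ℂ) (u : X → Matrix B B ℂ) (lam : X → B → ℝ)
    (hdec : ∀ x, A x = u x * Matrix.diagonal (fun b => ((lam x b : ℝ) : ℂ)) * star (u x)) :
    (∑ x, (c x : ℂ) • (Matrix.single x x (1 : ℂ) ⊗ₖ A x))
      = Matrix.reindex (Equiv.prodComm B X) (Equiv.prodComm B X) (Matrix.blockDiagonal u)
        * Matrix.diagonal (fun q : X × B => ((c q.1 * lam q.1 q.2 : ℝ) : ℂ))
        * star (Matrix.reindex (Equiv.prodComm B X) (Equiv.prodComm B X)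
            (Matrix.blockDiagonal u)) := by
  rw [cq_sum_eq]
  have hblock : (fun x => (c x : ℂ) • A x)
      = fun x => u x * Matrix.diagonal (fun b => ((c x * lam x b : ℝ) : ℂ)) * star (u x) := by
    funext x
    have hdd : Matrix.diagonal (fun b => ((c x * lam x b : ℝ) : ℂ))
        = (c x : ℂ) • Matrix.diagonal (fun b => ((lam x b : ℝ) : ℂ)) := by
      rw [← Matrix.diagonal_smul]
      refine congrArg _ (funext fun b => ?_)
      push_cast
      simp [smul_eq_mul]
    rw [hdec x, hdd, Matrix.mul_smul, Matrix.smul_mul]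
  rw [hblock]
  exact bd_conj_eq u (fun x b => c x * lam x b)

lemma cq_matLog (c : X → ℝ) (A : X → Matrix B B ℂ) (u : X → Matrix B B ℂ) (lam : X → B → ℝ)
    (hu1 : ∀ x, star (u x) * u x = 1) (hu2 : ∀ x, u x * star (u x) = 1)
    (hdec : ∀ x, A x = u x * Matrix.diagonal (fun b => ((lam x b : ℝ) : ℂ)) * star (u x)) :
    matLog (∑ x, (c x : ℂ) • (Matrix.single x x (1 : ℂ) ⊗ₖ A x))
      = Matrix.reindex (Equiv.prodComm B X) (Equiv.prodComm B X)
          (Matrix.blockDiagonal fun x =>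
            u x * Matrix.diagonal (fun b => ((Real.logb 2 (c x * lam x b) : ℝ) : ℂ))
              * star (u x)) := by
  have hdecomp := cq_decomp c A u lam hdec
  have hH : (∑ x, (c x : ℂ) • (Matrix.single x x (1 : ℂ) ⊗ₖ A x)).IsHermitian :=
    hdecomp ▸ conj_diag_isHermitian _ (fun q : X × B => c q.1 * lam q.1 q.2)
  rw [matLog_eq_of _ hH _ (bd_unitary u hu1) (bd_unitary' u hu2) _ hdecomp]
  exact (bd_conj_eq u (fun x b => Real.logb 2 (c x * lam x b))).symm

end Blocks2

end CQAux

end CQHelpers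

/-- Relative entropy variance of classical–quantum operators:
`V(ρ_XB‖σ_XB) = Σ_x r(x) V(ρ_B^x‖σ_B^x) + Var[W]`, where `W` takes the value
`log(r(x)/s(x)) + D(ρ_B^x‖σ_B^x)` with probability `r(x)`. -/

theorem relVar_cq {X B : Type*}
    [Fintype X] [DecidableEq X] [Fintype B] [DecidableEq B]
    (r s : X → ℝ) (hr : ∀ x, 0 ≤ r x) (hr1 : ∑ x, r x = 1)
    (hs : ∀ x, 0 < r x → 0 < s x)
    (ρ σ : X → Matrix B B ℂ)
    (hρ : ∀ x, (ρ x).PosSemidef) (hρtr : ∀ x, (ρ x).trace = 1)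
    (hσ : ∀ x, (σ x).PosSemidef)
    (hsupp : ∀ x, ∀ v : B → ℂ, (σ x).mulVec v = 0 → (ρ x).mulVec v = 0) :
    relVar
        (∑ x, (r x : ℂ) • (Matrix.single x x (1 : ℂ) ⊗ₖ ρ x))
        (∑ x, (s x : ℂ) • (Matrix.single x x (1 : ℂ) ⊗ₖ σ x)) =
      ∑ x, (r x : ℂ) * relVar (ρ x) (σ x) +
        (((∑ x, r x * (Real.logb 2 (r x / s x) + relEntropy (ρ x) (σ x)) ^ 2) -
          (∑ x, r x * (Real.logb 2 (r x / s x) + relEntropy (ρ x) (σ x))) ^ 2 : ℝ) : ℂ) := by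
  classical
  have hρH : ∀ x, (ρ x).IsHermitian := fun x => (hρ x).1
  have hσH : ∀ x, (σ x).IsHermitian := fun x => (hσ x).1
  set u : X → Matrix B B ℂ := fun x => ((hρH x).eigenvectorUnitary : Matrix B B ℂ) with hudef
  set lam : X → B → ℝ := fun x => (hρH x).eigenvalues with hlamdef
  set w : X → Matrix B B ℂ := fun x => ((hσH x).eigenvectorUnitary : Matrix B B ℂ) with hwdef
  set mu : X → B → ℝ := fun x => (hσH x).eigenvalues with hmudef
  have hu1 : ∀ x, star (u x) * u x = 1 := fun x => ((hρH x).eigenvectorUnitary).2.1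
  have hu2 : ∀ x, u x * star (u x) = 1 := fun x => ((hρH x).eigenvectorUnitary).2.2
  have hw1 : ∀ x, star (w x) * w x = 1 := fun x => ((hσH x).eigenvectorUnitary).2.1
  have hw2 : ∀ x, w x * star (w x) = 1 := fun x => ((hσH x).eigenvectorUnitary).2.2
  have hρdec : ∀ x, ρ x = u x * Matrix.diagonal (fun b => ((lam x b : ℝ) : ℂ)) * star (u x) :=
    fun x => (hρH x).spectral_theorem
  have hσdec : ∀ x, σ x = w x * Matrix.diagonal (fun b => ((mu x b : ℝ) : ℂ)) * star (w x) :=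
    fun x => (hσH x).spectral_theorem
  set e : B × X ≃ X × B := Equiv.prodComm B X with hedef
  set bigρ := ∑ x, (r x : ℂ) • (Matrix.single x x (1 : ℂ) ⊗ₖ ρ x) with hbigρdef
  set bigσ := ∑ x, (s x : ℂ) • (Matrix.single x x (1 : ℂ) ⊗ₖ σ x) with hbigσdef
  set Lρ : X → Matrix B B ℂ := fun x =>
    u x * Matrix.diagonal (fun b => ((Real.logb 2 (r x * lam x b) : ℝ) : ℂ)) * star (u x)
    with hLρdef
  set Lσ : X → Matrix B B ℂ := fun x =>
    w x * Matrix.diagonal (fun b => ((Real.logb 2 (s x * mu x b) : ℝ) : ℂ)) * star (w x)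
    with hLσdef
  have hmlρ : matLog bigρ = Matrix.reindex e e (Matrix.blockDiagonal Lρ) :=
    CQAux.cq_matLog r ρ u lam hu1 hu2 hρdec
  have hmlσ : matLog bigσ = Matrix.reindex e e (Matrix.blockDiagonal Lσ) :=
    CQAux.cq_matLog s σ w mu hw1 hw2 hσdec
  have hbigρbd : bigρ = Matrix.reindex e e (Matrix.blockDiagonal fun x => (r x : ℂ) • ρ x) :=
    CQAux.cq_sum_eq (fun x => (r x : ℂ)) ρ
  have hbigσbd : bigσ = Matrix.reindex e e (Matrix.blockDiagonal fun x => (s x : ℂ) • σ x) :=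
    CQAux.cq_sum_eq (fun x => (s x : ℂ)) σ
  have honebd : (1 : Matrix (X × B) (X × B) ℂ)
      = Matrix.reindex e e (Matrix.blockDiagonal (1 : X → Matrix B B ℂ)) := by
    rw [Matrix.blockDiagonal_one, CQAux.reindex_one]
  set D0 : ℝ := relEntropy bigρ bigσ with hD0def
  have hKbig : matLog bigρ - matLog bigσ - (D0 : ℂ) • (1 : Matrix (X × B) (X × B) ℂ)
      = Matrix.reindex e e (Matrix.blockDiagonal fun x =>
          Lρ x - Lσ x - (D0 : ℂ) • (1 : Matrix B B ℂ)) := by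
    rw [hmlρ, hmlσ, CQAux.reindex_sub, honebd, CQAux.reindex_smul, CQAux.reindex_sub]
    congr 1
    rw [← Matrix.blockDiagonal_smul, ← Matrix.blockDiagonal_sub, ← Matrix.blockDiagonal_sub]
    rfl
  have hΛ : matLog bigρ - matLog bigσ
      = Matrix.reindex e e (Matrix.blockDiagonal fun x => Lρ x - Lσ x) := by
    rw [hmlρ, hmlσ, CQAux.reindex_sub]
    congr 1
    rw [← Matrix.blockDiagonal_sub]
    rfl
  have step1 : bigρ * (matLog bigρ - matLog bigσ - (D0 : ℂ) • 1) ^ 2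
      = Matrix.reindex e e (Matrix.blockDiagonal fun x =>
          ((r x : ℂ) • ρ x) * (Lρ x - Lσ x - (D0 : ℂ) • (1 : Matrix B B ℂ)) ^ 2) := by
    rw [sq, hKbig, hbigρbd, CQAux.reindex_mul, CQAux.reindex_mul]
    congr 1
    rw [← Matrix.blockDiagonal_mul, ← Matrix.blockDiagonal_mul]
    refine congrArg _ (funext fun x => ?_)
    rw [sq]
  have step1m : bigρ * (matLog bigρ - matLog bigσ) ^ 1
      = Matrix.reindex e e (Matrix.blockDiagonal fun x =>
          ((r x : ℂ) • ρ x) * (Lρ x - Lσ x)) := by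
    rw [pow_one, hΛ, hbigρbd, CQAux.reindex_mul]
    congr 1
    rw [← Matrix.blockDiagonal_mul]
  set Av : X → ℝ := fun x => Real.logb 2 (r x / s x) + relEntropy (ρ x) (σ x) with hAv
  have hblock1 : ∀ x, (((r x : ℂ) • ρ x) * (Lρ x - Lσ x)).trace = ((r x * Av x : ℝ) : ℂ) := by
    intro x
    rcases (hr x).lt_or_eq with hx | hx
    · have hsx := hs x hx
      have hb := (CQAux.block_key (r x) (s x) D0 hx hsx (ρ x) (σ x) (u x) (w x) (lam x) (mu x)
        (hu1 x) (hu2 x) (hw1 x) (hw2 x) (hρdec x) (hσdec x) (hρtr x) (hsupp x)).1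
      rw [Matrix.smul_mul, Matrix.trace_smul]
      rw [show Lρ x = u x * Matrix.diagonal
            (fun b => ((Real.logb 2 (r x * lam x b) : ℝ) : ℂ)) * star (u x) from rfl,
          show Lσ x = w x * Matrix.diagonal
            (fun b => ((Real.logb 2 (s x * mu x b) : ℝ) : ℂ)) * star (w x) from rfl, hb]
      rw [show Av x = Real.logb 2 (r x / s x) + relEntropy (ρ x) (σ x) from rfl,
        Real.logb_div (ne_of_gt hx) (ne_of_gt hsx)]
      simp only [smul_eq_mul]
      push_cast
      ring
    · rw [← hx]
      push_cast
      simp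
  have hmom : relMoment 1 bigρ bigσ = ((∑ x, r x * Av x : ℝ) : ℂ) := by
    rw [relMoment, step1m, CQAux.trace_reindex, Matrix.trace_blockDiagonal]
    rw [Finset.sum_congr rfl (fun x _ => hblock1 x)]
    push_cast
    rfl
  have hD0 : D0 = ∑ x, r x * Av x := by
    rw [hD0def, relEntropy, hmom, Complex.ofReal_re]
  have hblock2 : ∀ x, (((r x : ℂ) • ρ x) * (Lρ x - Lσ x - (D0 : ℂ) • 1) ^ 2).trace
      = (r x : ℂ) * relVar (ρ x) (σ x) + (r x : ℂ) * (((Av x - D0 : ℝ) : ℂ)) ^ 2 := by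
    intro x
    rcases (hr x).lt_or_eq with hx | hx
    · have hsx := hs x hx
      have hb := (CQAux.block_key (r x) (s x) D0 hx hsx (ρ x) (σ x) (u x) (w x) (lam x) (mu x)
        (hu1 x) (hu2 x) (hw1 x) (hw2 x) (hρdec x) (hσdec x) (hρtr x) (hsupp x)).2
      rw [Matrix.smul_mul, Matrix.trace_smul]
      rw [show Lρ x = u x * Matrix.diagonal
            (fun b => ((Real.logb 2 (r x * lam x b) : ℝ) : ℂ)) * star (u x) from rfl,
          show Lσ x = w x * Matrix.diagonal
            (fun b => ((Real.logb 2 (s x * mu x b) : ℝ) : ℂ)) * star (w x) from rfl, hb]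
      have hAvx : Av x - D0 = Real.logb 2 (r x) - Real.logb 2 (s x) + relEntropy (ρ x) (σ x) - D0 := by
        rw [show Av x = Real.logb 2 (r x / s x) + relEntropy (ρ x) (σ x) from rfl,
          Real.logb_div (ne_of_gt hx) (ne_of_gt hsx)]
      rw [← hAvx]
      simp only [smul_eq_mul]
      push_cast
      ring
    · rw [← hx]
      push_cast
      simp
  have hfinal : relVar bigρ bigσ
      = ∑ x, ((r x : ℂ) * relVar (ρ x) (σ x) + (r x : ℂ) * (((Av x - D0 : ℝ) : ℂ)) ^ 2) := by
    rw [relVar, ← hD0def, step1, CQAux.trace_reindex, Matrix.trace_blockDiagonal]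
    exact Finset.sum_congr rfl fun x _ => hblock2 x
  rw [hfinal, Finset.sum_add_distrib]
  congr 1
  have hreal : (∑ x, r x * (Av x - D0) ^ 2)
      = (∑ x, r x * Av x ^ 2) - (∑ x, r x * Av x) ^ 2 := by
    have hexp : ∀ x ∈ Finset.univ, r x * (Av x - D0) ^ 2
        = r x * Av x ^ 2 - 2 * D0 * (r x * Av x) + D0 ^ 2 * r x := fun x _ => by ring
    rw [Finset.sum_congr rfl hexp, Finset.sum_add_distrib, Finset.sum_sub_distrib,
      ← Finset.mul_sum, ← Finset.mul_sum, hr1, ← hD0]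
    ring
  have hcast : ∀ x, (r x : ℂ) * (((Av x - D0 : ℝ) : ℂ)) ^ 2
      = ((r x * (Av x - D0) ^ 2 : ℝ) : ℂ) := fun x => by
    push_cast
    ring
  rw [Finset.sum_congr rfl (fun x _ => hcast x), ← Complex.ofReal_sum, hreal]
end

section
/- With ξ_{RB'Z} as in the flagged state (1−q)Φ^K ⊗ |0⟩⟨0| + q Σ_ℓ p_ℓ Φ̄^{K,ℓ} ⊗ |1⟩⟨1|, the coherent information variance equals V(R⟩B'Z)_ξ = q V(p) + q(1−q)(log K + H(p))², where H(p) and V(p) are the Shannon entropy and Shannon entropy variance of the distribution (p_ℓ). -/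
open Matrix Kronecker BigOperators
open scoped ComplexOrder

/-- The maximally entangled state `Φ^K = |Φ⟩⟨Φ|`, `|Φ⟩ = (1/√K) Σ_i |i⟩|i⟩`,
as a matrix on the bipartite system `R ⊗ B` with `R ≅ B ≅ ℂ^K`. -/
noncomputable def maxEnt (K : ℕ) :
    Matrix (Fin K × Fin K) (Fin K × Fin K) ℂ :=
  Matrix.of fun p q => if p.1 = p.2 ∧ q.1 = q.2 then (1 / (K : ℂ)) else 0

/-- Partial trace over the first tensor factor. -/
noncomputable def ptraceFst {R B : Type*} [Fintype R] [Fintype B]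
    (M : Matrix (R × B) (R × B) ℂ) : Matrix B B ℂ :=
  Matrix.of fun b b' => ∑ r : R, M (r, b) (r, b')
/-- The shifted maximally classically correlated state
`Φ̄^{K,ℓ} = (1/K) Σ_i |i⟩⟨i| ⊗ |i⊕ℓ⟩⟨i⊕ℓ|` (addition mod `K`). -/
noncomputable def corrBar (K : ℕ) [NeZero K] (ℓ : Fin K) :
    Matrix (Fin K × Fin K) (Fin K × Fin K) ℂ :=
  Matrix.of fun p q => if p = q ∧ p.2 = p.1 + ℓ then (1 / (K : ℂ)) else 0
/-- The flagged state
`ξ_{RB'Z} = (1−q) Φ^K ⊗ |0⟩⟨0|_Z + q Σ_ℓ p_ℓ Φ̄^{K,ℓ} ⊗ |1⟩⟨1|_Z`,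
with indices reassociated so that the bipartition is `R ⟩ (B' ⊗ Z)`. -/
noncomputable def xiFlag (K : ℕ) [NeZero K] (q : ℝ) (p : Fin K → ℝ) :
    Matrix (Fin K × (Fin K × Fin 2)) (Fin K × (Fin K × Fin 2)) ℂ :=
  Matrix.reindex (Equiv.prodAssoc (Fin K) (Fin K) (Fin 2))
    (Equiv.prodAssoc (Fin K) (Fin K) (Fin 2))
    (((1 - q : ℝ) : ℂ) • (maxEnt K ⊗ₖ Matrix.single (0 : Fin 2) (0 : Fin 2) (1 : ℂ)) +
      (q : ℂ) • ∑ ℓ, (p ℓ : ℂ) •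
        (corrBar K ℓ ⊗ₖ Matrix.single (1 : Fin 2) (1 : Fin 2) (1 : ℂ)))

/-- The Shannon entropy `H(p) = −Σ_ℓ p_ℓ log p_ℓ` (base-2). -/
noncomputable def shannonEnt {K : ℕ} (p : Fin K → ℝ) : ℝ :=
  -∑ ℓ, p ℓ * Real.logb 2 (p ℓ)
/-- The Shannon entropy variance `V(p) = Σ_ℓ p_ℓ (−log p_ℓ − H(p))²`. -/
noncomputable def shannonVar {K : ℕ} (p : Fin K → ℝ) : ℝ :=
  ∑ ℓ, p ℓ * (-Real.logb 2 (p ℓ) - shannonEnt p) ^ 2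

section Aux
open Polynomial
section Helpers
variable {n : Type*} [Fintype n] [DecidableEq n]

lemma conj_diag_pow (W : Matrix n n ℂ) (hW : W * Wᴴ = 1) (d : n → ℂ) (k : ℕ) :
    (W * Matrix.diagonal d * Wᴴ) ^ k = W * Matrix.diagonal (fun i => d i ^ k) * Wᴴ := by
  induction k with
  | zero => simp [Matrix.diagonal_one, hW]
  | succ k ih =>
      rw [pow_succ, ih]
      have : W * Matrix.diagonal (fun i => d i ^ k) * Wᴴ * (W * Matrix.diagonal d * Wᴴ)
          = W * (Matrix.diagonal (fun i => d i ^ k) * (Wᴴ * W) * Matrix.diagonal d) * Wᴴ := by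
        ring_nf
        simp [Matrix.mul_assoc]
      rw [this, mul_eq_one_comm.mp hW]
      simp [Matrix.diagonal_mul_diagonal, pow_succ]

lemma sum_smul_diagonal {N : ℕ} (c : ℕ → ℂ) (f : ℕ → n → ℂ) :
    ∑ i ∈ Finset.range N, c i • Matrix.diagonal (f i)
      = Matrix.diagonal (fun j => ∑ i ∈ Finset.range N, c i * f i j) := by
  ext a b
  by_cases h : a = b <;>
    simp [h, Matrix.diagonal_apply, Matrix.sum_apply]

lemma aeval_conj_diag (W : Matrix n n ℂ) (hW : W * Wᴴ = 1) (d : n → ℂ) (P : ℂ[X]) :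
    aeval (W * Matrix.diagonal d * Wᴴ) P
      = W * Matrix.diagonal (fun i => P.eval (d i)) * Wᴴ := by
  rw [aeval_eq_sum_range]
  have h1 : ∀ i ∈ Finset.range (P.natDegree + 1),
      P.coeff i • (W * Matrix.diagonal d * Wᴴ) ^ i
        = W * (P.coeff i • Matrix.diagonal (fun j => d j ^ i)) * Wᴴ := by
    intro i _
    rw [conj_diag_pow W hW]
    simp [Matrix.mul_smul, Matrix.smul_mul]
  rw [Finset.sum_congr rfl h1, ← Finset.sum_mul, ← Matrix.mul_sum,
    sum_smul_diagonal]
  congr 2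
  exact congrArg Matrix.diagonal (funext fun j => (eval_eq_sum_range (p := P) (d j)).symm)

lemma matLog_conj_diag (W : Matrix n n ℂ) (hW : W * Wᴴ = 1) (e : n → ℝ) :
    matLog (W * Matrix.diagonal (fun i => (e i : ℂ)) * Wᴴ) =
      W * Matrix.diagonal (fun i => (Real.logb 2 (e i) : ℂ)) * Wᴴ := by
  set A := W * Matrix.diagonal (fun i => (e i : ℂ)) * Wᴴ with hAdef
  have hA : A.IsHermitian := by
    rw [hAdef]
    exact Matrix.isHermitian_mul_mul_conjTranspose W
      (Matrix.isHermitian_diagonal_iff.mpr (fun i => Complex.conj_ofReal _))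
  -- spectral data
  set V : Matrix n n ℂ := (hA.eigenvectorUnitary : Matrix n n ℂ) with hVdef
  have hV : V * Vᴴ = 1 := by
    simpa [hVdef, Matrix.star_eq_conjTranspose] using
      (Matrix.mem_unitaryGroup_iff.mp hA.eigenvectorUnitary.2)
  set lam := hA.eigenvalues with hlam
  -- node set
  classical
  set s : Finset ℝ := (Finset.univ.image lam) ∪ (Finset.univ.image e) with hs
  set P : ℝ[X] := Lagrange.interpolate s id (Real.logb 2) with hP
  set Q : ℂ[X] := P.map (algebraMap ℝ ℂ) with hQ
  have hQeval : ∀ x ∈ s, Q.eval ((x : ℝ) : ℂ) = ((Real.logb 2 x : ℝ) : ℂ) := by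
    intro x hx
    have h1 : Q.eval ((x : ℝ) : ℂ) = algebraMap ℝ ℂ (P.eval x) := by
      rw [hQ, Polynomial.eval_map]
      exact Polynomial.eval₂_at_apply (p := P) (algebraMap ℝ ℂ) x
    rw [h1]
    simpa [hP] using congrArg (algebraMap ℝ ℂ)
      (Lagrange.eval_interpolate_at_node (v := id) (Real.logb 2) (Set.injOn_id _) hx)
  have hmeml : ∀ i, lam i ∈ s := fun i => Finset.mem_union_left _
    (Finset.mem_image.mpr ⟨i, Finset.mem_univ i, rfl⟩)
  have hmeme : ∀ i, e i ∈ s := fun i => Finset.mem_union_right _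
    (Finset.mem_image.mpr ⟨i, Finset.mem_univ i, rfl⟩)
  have key : aeval A Q = W * Matrix.diagonal (fun i => (Real.logb 2 (e i) : ℂ)) * Wᴴ := by
    rw [hAdef, aeval_conj_diag W hW]
    congr 2
    exact congrArg Matrix.diagonal (funext fun i => hQeval _ (hmeme i))
  have key2 : aeval A Q =
      V * Matrix.diagonal (fun i => (Real.logb 2 (lam i) : ℂ)) * Vᴴ := by
    have hspec : A = V * Matrix.diagonal (fun i => ((lam i : ℝ) : ℂ)) * Vᴴ := by
      simpa [hVdef, hlam, Matrix.star_eq_conjTranspose, Function.comp_def] using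
        hA.spectral_theorem
    rw [hspec, aeval_conj_diag V hV]
    congr 2
    exact congrArg Matrix.diagonal (funext fun i => hQeval _ (hmeml i))
  rw [matLog, dif_pos hA]
  have h := key2.symm.trans key
  simpa [hVdef, hlam, Matrix.star_eq_conjTranspose] using h

end Helpers

noncomputable def zetaK (K : ℕ) : ℂ := Complex.exp (2 * Real.pi * Complex.I / K)

lemma zetaK_prim (K : ℕ) [NeZero K] : IsPrimitiveRoot (zetaK K) K :=
  Complex.isPrimitiveRoot_exp K (NeZero.ne K)

lemma zetaK_conj_mul_self (K : ℕ) (m : ℕ) :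
    (starRingEnd ℂ) ((zetaK K) ^ m) * (zetaK K) ^ m = 1 := by
  rw [← Complex.normSq_eq_conj_mul_self]
  have habs : ‖zetaK K‖ = 1 := by
    rw [zetaK, Complex.norm_exp]
    norm_num [Complex.div_re, Complex.mul_re, Complex.mul_im]
  rw [Complex.normSq_eq_norm_sq]
  simp [map_pow, habs]

lemma rou_sum (K : ℕ) [NeZero K] (β β' : Fin K) :
    (∑ r : Fin K, (starRingEnd ℂ) ((zetaK K) ^ (r.val * β.val)) * (zetaK K) ^ (r.val * β'.val))
      = if β = β' then (K : ℂ) else 0 := by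
  set ζ := zetaK K with hζdef
  set μ : ℂ := (starRingEnd ℂ) (ζ ^ β.val) * ζ ^ β'.val with hμ
  have hterm : ∀ r : Fin K,
      (starRingEnd ℂ) (ζ ^ (r.val * β.val)) * ζ ^ (r.val * β'.val) = μ ^ r.val := by
    intro r
    rw [hμ, mul_pow, mul_comm r.val β.val, mul_comm r.val β'.val, pow_mul, pow_mul, map_pow]
  rw [Finset.sum_congr rfl (fun r _ => hterm r)]
  by_cases h : β = β'
  · subst h
    have h1 : μ = 1 := zetaK_conj_mul_self K β.val
    simp [h1, Finset.card_univ]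
  · rw [if_neg h]
    have hμK : μ ^ K = 1 := by
      rw [hμ, mul_pow, ← map_pow, ← pow_mul, ← pow_mul,
        mul_comm β.val K, mul_comm β'.val K, pow_mul, pow_mul,
        (zetaK_prim K).pow_eq_one]
      simp
    have hμne : μ ≠ 1 := by
      intro hc
      apply h
      have h2 : ζ ^ β.val = ζ ^ β'.val := by
        have := congrArg (fun z => ζ ^ β.val * z) hc
        simp only [mul_one] at this
        rw [hμ, ← mul_assoc, mul_comm (ζ ^ β.val) _, zetaK_conj_mul_self K β.val, one_mul] at this
        exact this.symm
      exact Fin.eq_of_val_eq ((zetaK_prim K).pow_inj β.isLt β'.isLt h2)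
    rw [Fin.sum_univ_eq_sum_range (fun i => μ ^ i) K, geom_sum_eq hμne, hμK]
    simp

noncomputable def bellW (K : ℕ) [NeZero K] :
    Matrix (Fin K × (Fin K × Fin 2)) (Fin K × (Fin K × Fin 2)) ℂ :=
  Matrix.of fun x y =>
    if x.2.2 = y.2.2 ∧ x.2.1 = x.1 + y.1
    then zetaK K ^ (x.1.val * y.2.1.val) / (Real.sqrt K : ℂ) else 0

lemma bellW_unitary (K : ℕ) [NeZero K] : (bellW K)ᴴ * bellW K = 1 := by
  have hK0 : (0:ℝ) ≤ (K:ℝ) := Nat.cast_nonneg K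
  have hKne : ((K:ℝ):ℂ) ≠ 0 := by
    exact_mod_cast Nat.cast_ne_zero.mpr (NeZero.ne K)
  have hsq : ((Real.sqrt K : ℝ):ℂ) * ((Real.sqrt K : ℝ):ℂ) = ((K:ℝ):ℂ) := by
    rw [← Complex.ofReal_mul, Real.mul_self_sqrt hK0]
  ext ⟨a, β, w⟩ ⟨a', β', w'⟩
  rw [Matrix.mul_apply]
  have hterm : ∀ x : Fin K × (Fin K × Fin 2),
      (bellW K)ᴴ (a,(β,w)) x * bellW K x (a',(β',w'))
      = if (x.2.1, x.2.2) = (x.1 + a, w) ∧ w = w' ∧ a = a'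
        then (starRingEnd ℂ) (zetaK K ^ (x.1.val * β.val)) * zetaK K ^ (x.1.val * β'.val) / ((K:ℝ):ℂ)
        else 0 := by
    rintro ⟨r, b, z⟩
    simp only [Matrix.conjTranspose_apply, bellW, Matrix.of_apply, RCLike.star_def]
    by_cases h1 : z = w ∧ b = r + a
    · by_cases h2 : z = w' ∧ b = r + a'
      · have hww : w = w' := h1.1 ▸ h2.1
        have haa : a = a' := by
          have := h1.2 ▸ h2.2
          exact add_left_cancel this.symm ▸ rfl
        rw [if_pos h1, if_pos h2, if_pos ⟨by simp [h1.1, h1.2], hww, haa⟩]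
        rw [map_div₀, Complex.conj_ofReal, div_mul_div_comm, hsq]
      · rw [if_pos h1, if_neg h2, mul_zero, if_neg]
        rintro ⟨hbz, hww, haa⟩
        exact h2 ⟨h1.1.trans hww, haa ▸ h1.2⟩
    · rw [if_neg h1, map_zero, zero_mul, if_neg]
      rintro ⟨hbz, hww, haa⟩
      rw [Prod.ext_iff] at hbz
      exact h1 ⟨hbz.2, hbz.1⟩
  rw [Finset.sum_congr rfl (fun x _ => hterm x)]
  rw [Fintype.sum_prod_type]
  simp only [ite_and, Finset.sum_ite_eq', Finset.mem_univ, if_true]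
  by_cases hww : w = w'
  · by_cases haa : a = a'
    · subst hww; subst haa
      simp only [if_true]
      rw [← Finset.sum_div, rou_sum K β β']
      by_cases hbb : β = β'
      · subst hbb
        simp [Matrix.one_apply, div_self hKne]
      · simp [Matrix.one_apply, hbb, Prod.ext_iff]
    · simp [Matrix.one_apply, haa, Prod.ext_iff]
  · simp [Matrix.one_apply, hww, Prod.ext_iff]

lemma fin_add_sub (K : ℕ) [NeZero K] (r b : Fin K) : r + (b - r) = b := by abel

lemma xiFlag_apply (K : ℕ) [NeZero K] (q : ℝ) (p : Fin K → ℝ)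
    (r b r' b' : Fin K) (z z' : Fin 2) :
    xiFlag K q p (r,(b,z)) (r',(b',z')) =
      (if z = 0 ∧ z' = 0 ∧ r = b ∧ r' = b' then ((1-q : ℝ):ℂ) / K else 0)
    + (if z = 1 ∧ z' = 1 ∧ r = r' ∧ b = b' then ((q * p (b - r) : ℝ):ℂ) / K else 0) := by
  simp only [xiFlag, Matrix.reindex_apply, Matrix.submatrix_apply, Equiv.prodAssoc_symm_apply,
    Matrix.add_apply, Matrix.smul_apply, Matrix.kroneckerMap_apply, maxEnt, corrBar,
    Matrix.of_apply, Matrix.sum_apply, Matrix.single, smul_eq_mul]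
  congr 1
  · by_cases h1 : r = b ∧ r' = b'
    · by_cases h2 : z = 0 ∧ z' = 0
      · rw [if_pos h1, if_pos (show (0:Fin 2) = z ∧ (0:Fin 2) = z' from ⟨h2.1.symm, h2.2.symm⟩),
          if_pos (show z = 0 ∧ z' = 0 ∧ r = b ∧ r' = b' from ⟨h2.1, h2.2, h1.1, h1.2⟩)]
        push_cast
        ring
      · rw [if_neg (show ¬((0:Fin 2) = z ∧ (0:Fin 2) = z') from
            fun h => h2 ⟨h.1.symm, h.2.symm⟩),
          if_neg (show ¬(z = 0 ∧ z' = 0 ∧ r = b ∧ r' = b') from fun h => h2 ⟨h.1, h.2.1⟩)]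
        ring
    · rw [if_neg h1, if_neg (show ¬(z = 0 ∧ z' = 0 ∧ r = b ∧ r' = b') from
        fun h => h1 ⟨h.2.2.1, h.2.2.2⟩)]
      ring
  · have hsum : ∑ ℓ : Fin K, (p ℓ : ℂ) * ((if (r,b) = (r',b') ∧ b = r + ℓ then 1/(K:ℂ) else 0) *
          (if (1:Fin 2) = z ∧ (1:Fin 2) = z' then 1 else 0))
        = if z = 1 ∧ z' = 1 ∧ r = r' ∧ b = b' then (p (b - r) : ℂ)/(K:ℂ) else 0 := by
      rw [Finset.sum_eq_single (b - r)]
      · by_cases h : z = 1 ∧ z' = 1 ∧ r = r' ∧ b = b'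
        · rw [if_pos (show (r,b) = (r',b') ∧ b = r + (b - r) from
              ⟨by rw [h.2.2.1, h.2.2.2], (fin_add_sub K r b).symm⟩),
            if_pos (show (1:Fin 2) = z ∧ (1:Fin 2) = z' from ⟨h.1.symm, h.2.1.symm⟩), if_pos h]
          ring
        · rw [if_neg h]
          by_cases hA : (r,b) = (r',b')
          · by_cases hB : (1:Fin 2) = z ∧ (1:Fin 2) = z'
            · exact absurd ⟨hB.1.symm, hB.2.symm, congrArg Prod.fst hA,
                congrArg Prod.snd hA⟩ h
            · rw [if_neg hB]
              ring
          · rw [if_neg (show ¬((r,b) = (r',b') ∧ b = r + (b - r)) from fun hh => hA hh.1)]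
            ring
      · intro ℓ _ hℓ
        rw [if_neg (fun hh : (r,b) = (r',b') ∧ b = r + ℓ => hℓ (by rw [hh.2]; abel))]
        ring
      · intro h
        exact absurd (Finset.mem_univ _) h
    rw [hsum]
    by_cases h : z = 1 ∧ z' = 1 ∧ r = r' ∧ b = b' <;> simp [h] <;> push_cast <;> ring

end Aux

section Main
variable {K : ℕ} [NeZero K]

lemma rou_sum' (K : ℕ) [NeZero K] (r r' : Fin K) :
    (∑ β : Fin K, zetaK K ^ (r.val * β.val) * (starRingEnd ℂ) (zetaK K ^ (r'.val * β.val)))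
      = if r = r' then (K : ℂ) else 0 := by
  have h := rou_sum K r' r
  have e : ∀ β : Fin K, zetaK K ^ (r.val * β.val) * (starRingEnd ℂ) (zetaK K ^ (r'.val * β.val))
      = (starRingEnd ℂ) (zetaK K ^ (β.val * r'.val)) * zetaK K ^ (β.val * r.val) := by
    intro β
    rw [mul_comm r.val β.val, mul_comm r'.val β.val, mul_comm]
  rw [Finset.sum_congr rfl (fun β _ => e β), h]
  by_cases hrr : r' = r
  · simp [hrr]
  · rw [if_neg hrr, if_neg (fun hh => hrr hh.symm)]

noncomputable def Efun (K : ℕ) [NeZero K] (q : ℝ) (p : Fin K → ℝ) :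
    (Fin K × (Fin K × Fin 2)) → ℝ := fun y =>
  if y.2.2 = 0 then (if y.1 = 0 ∧ y.2.1 = 0 then 1 - q else 0) else q * p y.1 / K

lemma xiFlag_eq (K : ℕ) [NeZero K] (q : ℝ) (p : Fin K → ℝ) :
    xiFlag K q p = bellW K * Matrix.diagonal (fun y => ((Efun K q p y : ℝ) : ℂ)) * (bellW K)ᴴ := by
  have hK0 : (0:ℝ) ≤ (K:ℝ) := Nat.cast_nonneg K
  have hKne : ((K:ℝ):ℂ) ≠ 0 := by exact_mod_cast Nat.cast_ne_zero.mpr (NeZero.ne K)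
  have hsq : ((Real.sqrt K : ℝ):ℂ) * ((Real.sqrt K : ℝ):ℂ) = ((K:ℝ):ℂ) := by
    rw [← Complex.ofReal_mul, Real.mul_self_sqrt hK0]
  have hdiv : ∀ A B E : ℂ, A / ((Real.sqrt K : ℝ):ℂ) * E * (B / ((Real.sqrt K : ℝ):ℂ))
      = A * B * E / ((K:ℝ):ℂ) := by
    intro A B E
    rw [← hsq]
    ring
  ext ⟨r, b, z⟩ ⟨r', b', z'⟩
  rw [xiFlag_apply]
  rw [Matrix.mul_apply]
  have hterm : ∀ y : Fin K × (Fin K × Fin 2),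
      (bellW K * Matrix.diagonal (fun y => ((Efun K q p y : ℝ) : ℂ))) (r,(b,z)) y *
        (bellW K)ᴴ y (r',(b',z'))
      = if y.1 = b - r then (if y.2.2 = z then (if z' = z ∧ b' = r' + (b - r) then
          zetaK K ^ (r.val * y.2.1.val) * (starRingEnd ℂ) (zetaK K ^ (r'.val * y.2.1.val)) *
            ((Efun K q p (b - r, (y.2.1, z)) : ℝ):ℂ) / ((K:ℝ):ℂ) else 0) else 0) else 0 := by
    rintro ⟨aa, β, ww⟩
    rw [Matrix.mul_diagonal]
    simp only [Matrix.conjTranspose_apply, bellW, Matrix.of_apply, RCLike.star_def]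
    by_cases h1 : z = ww ∧ b = r + aa
    · have g1 : aa = b - r := by rw [h1.2]; abel
      have g2 : ww = z := h1.1.symm
      by_cases h2 : z' = ww ∧ b' = r' + aa
      · have g3 : z' = z ∧ b' = r' + (b - r) := ⟨h2.1.trans g2, by rw [← g1]; exact h2.2⟩
        rw [if_pos h1, if_pos h2, if_pos g1, if_pos g2, if_pos g3, ← g1, ← g2]
        rw [map_div₀, Complex.conj_ofReal]
        exact hdiv _ _ _
      · rw [if_pos h1, if_neg h2, map_zero, mul_zero, if_pos g1, if_pos g2, if_neg]
        rintro ⟨hz', hb'⟩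
        exact h2 ⟨hz'.trans g2.symm, by rw [g1]; exact hb'⟩
    · rw [if_neg h1, zero_mul, zero_mul]
      by_cases g1 : aa = b - r
      · by_cases g2 : ww = z
        · exact absurd ⟨g2.symm, by rw [g1, fin_add_sub]⟩ h1
        · rw [if_pos g1, if_neg g2]
      · rw [if_neg g1]
  rw [Finset.sum_congr rfl (fun y _ => hterm y)]
  rw [Fintype.sum_prod_type]
  simp only [Fintype.sum_prod_type]
  simp only [Finset.sum_ite_irrel, Finset.sum_const_zero, Finset.sum_ite_eq',
    Finset.mem_univ, if_true]
  have fin2cases : ∀ a : Fin 2, a = 0 ∨ a = 1 := by omega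
  rcases fin2cases z with hz | hz <;> rcases fin2cases z' with hz' | hz' <;>
    subst hz <;> subst hz'
  · have hE : ∀ x : Fin K, ((Efun K q p (b - r, x, 0) : ℝ) : ℂ)
        = if x = 0 then (if b - r = 0 then ((1-q:ℝ):ℂ) else 0) else 0 := by
      intro x
      by_cases h1 : b - r = 0 <;> by_cases h2 : x = 0 <;> simp [Efun, h1, h2]
    simp only [hE]
    have hsum2 : ∀ x : Fin K, zetaK K ^ (r.val * x.val) *
        (starRingEnd ℂ) (zetaK K ^ (r'.val * x.val)) *
        (if x = 0 then (if b - r = 0 then ((1-q:ℝ):ℂ) else 0) else 0) / ((K:ℝ):ℂ)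
        = if x = 0 then (if b - r = 0 then ((1-q:ℝ):ℂ)/((K:ℝ):ℂ) else 0) else 0 := by
      intro x
      by_cases h2 : x = 0
      · subst h2
        by_cases h1 : b - r = 0 <;> simp [h1]
      · simp [h2]
    rw [Finset.sum_congr rfl (fun x _ => hsum2 x)]
    simp only [Finset.sum_ite_eq', Finset.mem_univ, if_true]
    norm_num
    by_cases h1 : b - r = 0
    · have hrb : b = r := sub_eq_zero.mp h1
      subst hrb
      rw [if_pos h1, sub_self, add_zero]
      by_cases h2 : r' = b'
      · subst h2
        simp
      · rw [if_neg (show ¬(b = b ∧ r' = b') from fun h => h2 h.2),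
          if_neg (show ¬(b' = r') from fun h => h2 h.symm)]
    · rw [if_neg (show ¬(r = b ∧ r' = b') from fun h => h1 (by rw [h.1]; exact sub_self _))]
      by_cases h2 : b' = r' + (b - r) <;> simp [h1, h2]
  · norm_num
  · norm_num
  · have hE : ∀ x : Fin K, ((Efun K q p (b - r, x, 1) : ℝ) : ℂ)
        = ((q * p (b - r) / K : ℝ):ℂ) := by
      intro x
      simp [Efun]
    simp only [hE]
    rw [Finset.sum_congr rfl (fun x _ => mul_div_assoc
      (zetaK K ^ (r.val * x.val) * (starRingEnd ℂ) (zetaK K ^ (r'.val * x.val))) _ _),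
      ← Finset.sum_mul, rou_sum']
    norm_num
    by_cases hr : r = r'
    · subst hr
      by_cases hb : b = b'
      · subst hb
        rw [if_pos (show b = r + (b - r) from (fin_add_sub K r b).symm),
          if_pos (show r = r ∧ b = b from ⟨rfl, rfl⟩), if_pos rfl]
        have hKc : (K:ℂ) ≠ 0 := Nat.cast_ne_zero.mpr (NeZero.ne K)
        push_cast
        field_simp
      · rw [if_neg (show ¬(r = r ∧ b = b') from fun h => hb h.2),
          if_neg (show ¬(b' = r + (b - r)) from
            fun h => hb (h.trans (fin_add_sub K r b)).symm)]
    · rw [if_neg (show ¬(r = r' ∧ b = b') from fun h => hr h.1)]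
      by_cases h2 : b' = r' + (b - r) <;> simp [hr, h2]

lemma fin2cases' (a : Fin 2) : a = 0 ∨ a = 1 := by omega

noncomputable def Dfun (K : ℕ) (q : ℝ) : Fin 2 → ℝ :=
  fun z => if z = 0 then (1-q)/K else q/K

lemma ptraceFst_xiFlag (K : ℕ) [NeZero K] (q : ℝ) (p : Fin K → ℝ) (hp1 : ∑ ℓ, p ℓ = 1) :
    ptraceFst (xiFlag K q p)
      = Matrix.diagonal (fun y : Fin K × Fin 2 => ((Dfun K q y.2 : ℝ) : ℂ)) := by
  have hKc : ((K:ℝ):ℂ) ≠ 0 := by exact_mod_cast Nat.cast_ne_zero.mpr (NeZero.ne K)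
  ext ⟨b, z⟩ ⟨b', z'⟩
  simp only [ptraceFst, Matrix.of_apply]
  rw [Finset.sum_congr rfl (fun r _ => xiFlag_apply K q p r b r b' z z'),
    Finset.sum_add_distrib]
  have h1 : ∑ r : Fin K, (if z = 0 ∧ z' = 0 ∧ r = b ∧ r = b' then ((1-q:ℝ):ℂ)/(K:ℂ) else 0)
      = if z = 0 ∧ z' = 0 ∧ b = b' then ((1-q:ℝ):ℂ)/(K:ℂ) else 0 := by
    rw [Finset.sum_eq_single b]
    · by_cases h : z = 0 ∧ z' = 0 ∧ b = b'
      · rw [if_pos (show z = 0 ∧ z' = 0 ∧ b = b ∧ b = b' from ⟨h.1, h.2.1, rfl, h.2.2⟩),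
          if_pos h]
      · rw [if_neg (show ¬(z = 0 ∧ z' = 0 ∧ b = b ∧ b = b') from
          fun hh => h ⟨hh.1, hh.2.1, hh.2.2.2⟩), if_neg h]
    · intro r _ hr
      rw [if_neg (show ¬(z = 0 ∧ z' = 0 ∧ r = b ∧ r = b') from fun hh => hr hh.2.2.1)]
    · intro hmem
      exact absurd (Finset.mem_univ _) hmem
  have h2 : ∑ r : Fin K, (if z = 1 ∧ z' = 1 ∧ r = r ∧ b = b' then ((q * p (b - r) : ℝ):ℂ)/(K:ℂ) else 0)
      = if z = 1 ∧ z' = 1 ∧ b = b' then ((q:ℝ):ℂ)/(K:ℂ) else 0 := by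
    have hiff : ∀ r : Fin K, (z = 1 ∧ z' = 1 ∧ r = r ∧ b = b') ↔ (z = 1 ∧ z' = 1 ∧ b = b') := by
      intro r
      constructor
      · rintro ⟨ha, hb, _, hc⟩; exact ⟨ha, hb, hc⟩
      · rintro ⟨ha, hb, hc⟩; exact ⟨ha, hb, rfl, hc⟩
    rw [Finset.sum_congr rfl (fun r _ => if_congr (hiff r) rfl rfl)]
    rw [Finset.sum_ite_irrel, Finset.sum_const_zero]
    congr 1
    have hshift : ∑ r : Fin K, ((p (b - r) : ℝ):ℂ) = 1 := by
      rw [Fintype.sum_equiv (Equiv.subLeft b) (fun r => ((p (b - r):ℝ):ℂ)) (fun x => ((p x:ℝ):ℂ))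
        (fun r => rfl)]
      rw [← Complex.ofReal_sum]
      rw [hp1]
      norm_num
    calc ∑ r : Fin K, ((q * p (b - r) : ℝ):ℂ)/(K:ℂ)
        = (q:ℂ)/(K:ℂ) * ∑ r : Fin K, ((p (b - r):ℝ):ℂ) := by
          rw [Finset.mul_sum]
          congr 1
          funext r
          push_cast
          ring
      _ = ((q:ℝ):ℂ)/(K:ℂ) := by rw [hshift, mul_one]
  rw [h1, h2, Matrix.diagonal_apply]
  by_cases hbb : b = b'
  · subst hbb
    rcases fin2cases' z with hz | hz <;> rcases fin2cases' z' with hz' | hz' <;>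
      subst hz <;> subst hz' <;> simp [Dfun, Prod.ext_iff] <;> push_cast <;> ring
  · simp [Prod.ext_iff, hbb]

lemma kron_ptrace_eq (K : ℕ) [NeZero K] (q : ℝ) (p : Fin K → ℝ) (hp1 : ∑ ℓ, p ℓ = 1) :
    (1 : Matrix (Fin K) (Fin K) ℂ) ⊗ₖ ptraceFst (xiFlag K q p)
      = Matrix.diagonal (fun x : Fin K × (Fin K × Fin 2) => ((Dfun K q x.2.2 : ℝ):ℂ)) := by
  rw [ptraceFst_xiFlag K q p hp1, ← Matrix.diagonal_one, Matrix.diagonal_kronecker_diagonal]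
  simp

lemma matLog_diag {n : Type*} [Fintype n] [DecidableEq n] (e : n → ℝ) :
    matLog (Matrix.diagonal fun i => ((e i:ℝ):ℂ))
      = Matrix.diagonal fun i => ((Real.logb 2 (e i) :ℝ):ℂ) := by
  have h := matLog_conj_diag (1 : Matrix n n ℂ) (by simp) e
  simpa using h

lemma diag_conj_bellW (K : ℕ) [NeZero K] (g : Fin 2 → ℂ) :
    bellW K * Matrix.diagonal (fun x : Fin K × (Fin K × Fin 2) => g x.2.2) * (bellW K)ᴴ
      = Matrix.diagonal (fun x : Fin K × (Fin K × Fin 2) => g x.2.2) := by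
  have hW : bellW K * (bellW K)ᴴ = 1 := mul_eq_one_comm.mp (bellW_unitary K)
  have hcomm : bellW K * Matrix.diagonal (fun x : Fin K × (Fin K × Fin 2) => g x.2.2)
      = Matrix.diagonal (fun x : Fin K × (Fin K × Fin 2) => g x.2.2) * bellW K := by
    ext x y
    rw [Matrix.mul_diagonal, Matrix.diagonal_mul]
    by_cases h : bellW K x y = 0
    · rw [h]; ring
    · have hz : x.2.2 = y.2.2 := by
        by_contra hzw
        exact h (by simp [bellW, hzw])
      rw [hz]; ring
  rw [hcomm, Matrix.mul_assoc, hW, Matrix.mul_one]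

lemma relMoment_xiFlag (K : ℕ) [NeZero K] (q : ℝ) (p : Fin K → ℝ) (hp1 : ∑ ℓ, p ℓ = 1)
    (k : ℕ) :
    relMoment k (xiFlag K q p) ((1 : Matrix (Fin K) (Fin K) ℂ) ⊗ₖ ptraceFst (xiFlag K q p))
      = ((∑ x : Fin K × (Fin K × Fin 2), Efun K q p x *
          (Real.logb 2 (Efun K q p x) - Real.logb 2 (Dfun K q x.2.2))^k : ℝ) : ℂ) := by
  have hW : bellW K * (bellW K)ᴴ = 1 := mul_eq_one_comm.mp (bellW_unitary K)
  rw [relMoment, kron_ptrace_eq K q p hp1, xiFlag_eq K q p,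
    matLog_conj_diag (bellW K) hW (Efun K q p),
    matLog_diag (fun x : Fin K × (Fin K × Fin 2) => Dfun K q x.2.2),
    ← diag_conj_bellW K (fun z => ((Real.logb 2 (Dfun K q z) : ℝ):ℂ))]
  have hdiff : (bellW K * Matrix.diagonal (fun x => ((Real.logb 2 (Efun K q p x):ℝ):ℂ)) * (bellW K)ᴴ)
      - (bellW K * Matrix.diagonal (fun x : Fin K × (Fin K × Fin 2) => ((Real.logb 2 (Dfun K q x.2.2):ℝ):ℂ)) * (bellW K)ᴴ)
      = bellW K * Matrix.diagonal (fun x =>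
          ((Real.logb 2 (Efun K q p x):ℝ):ℂ) - ((Real.logb 2 (Dfun K q x.2.2):ℝ):ℂ)) * (bellW K)ᴴ := by
    rw [← Matrix.sub_mul, ← Matrix.mul_sub, Matrix.diagonal_sub]
  rw [hdiff, conj_diag_pow (bellW K) hW]
  have hmul : (bellW K * Matrix.diagonal (fun x => ((Efun K q p x : ℝ):ℂ)) * (bellW K)ᴴ) *
      (bellW K * Matrix.diagonal (fun x => (((Real.logb 2 (Efun K q p x):ℝ):ℂ) - ((Real.logb 2 (Dfun K q x.2.2):ℝ):ℂ))^k) * (bellW K)ᴴ)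
      = bellW K * Matrix.diagonal (fun x => ((Efun K q p x : ℝ):ℂ) *
          (((Real.logb 2 (Efun K q p x):ℝ):ℂ) - ((Real.logb 2 (Dfun K q x.2.2):ℝ):ℂ))^k) * (bellW K)ᴴ := by
    have h1 : (bellW K)ᴴ * (bellW K * Matrix.diagonal (fun x => (((Real.logb 2 (Efun K q p x):ℝ):ℂ) - ((Real.logb 2 (Dfun K q x.2.2):ℝ):ℂ))^k) * (bellW K)ᴴ)
        = Matrix.diagonal (fun x => (((Real.logb 2 (Efun K q p x):ℝ):ℂ) - ((Real.logb 2 (Dfun K q x.2.2):ℝ):ℂ))^k) * (bellW K)ᴴ := by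
      rw [← Matrix.mul_assoc, ← Matrix.mul_assoc, bellW_unitary K, Matrix.one_mul]
    rw [Matrix.mul_assoc (bellW K * Matrix.diagonal _), h1, ← Matrix.mul_assoc,
      Matrix.mul_assoc (bellW K) _ _, Matrix.diagonal_mul_diagonal]
  rw [hmul, Matrix.trace_mul_cycle, bellW_unitary K, Matrix.one_mul, Matrix.trace_diagonal]
  push_cast
  rfl

lemma moment_sum (K : ℕ) [NeZero K] (q : ℝ) (p : Fin K → ℝ) (k : ℕ) :
    (∑ x : Fin K × (Fin K × Fin 2), Efun K q p x *
        (Real.logb 2 (Efun K q p x) - Real.logb 2 (Dfun K q x.2.2))^k)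
      = (1-q) * (Real.logb 2 (1-q) - Real.logb 2 ((1-q)/K))^k
        + ∑ a, q * p a * (Real.logb 2 (q * p a / K) - Real.logb 2 (q/K))^k := by
  have hKR : (K:ℝ) ≠ 0 := Nat.cast_ne_zero.mpr (NeZero.ne K)
  rw [Fintype.sum_prod_type]
  have hz : ∀ a β : Fin K, (∑ z : Fin 2, Efun K q p (a,(β,z)) *
      (Real.logb 2 (Efun K q p (a,(β,z))) - Real.logb 2 (Dfun K q z))^k)
      = (if a = 0 ∧ β = 0 then (1-q) * (Real.logb 2 (1-q) - Real.logb 2 ((1-q)/K))^k else 0)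
        + (q * p a / K) * (Real.logb 2 (q * p a / K) - Real.logb 2 (q/K))^k := by
    intro a β
    rw [Fin.sum_univ_two]
    have e0 : Efun K q p (a,(β,0)) *
        (Real.logb 2 (Efun K q p (a,(β,0))) - Real.logb 2 (Dfun K q 0))^k
        = (if a = 0 ∧ β = 0 then (1-q) * (Real.logb 2 (1-q) - Real.logb 2 ((1-q)/K))^k else 0) := by
      by_cases h : a = 0 ∧ β = 0 <;> simp [Efun, Dfun, h]
    have e1 : Efun K q p (a,(β,1)) *
        (Real.logb 2 (Efun K q p (a,(β,1))) - Real.logb 2 (Dfun K q 1))^k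
        = (q * p a / K) * (Real.logb 2 (q * p a / K) - Real.logb 2 (q/K))^k := by
      simp [Efun, Dfun]
    rw [e0, e1]
  have hinner : ∀ a : Fin K, (∑ y : Fin K × Fin 2, Efun K q p (a, y) *
      (Real.logb 2 (Efun K q p (a, y)) - Real.logb 2 (Dfun K q y.2))^k)
      = (if a = 0 then (1-q) * (Real.logb 2 (1-q) - Real.logb 2 ((1-q)/K))^k else 0)
        + q * p a * (Real.logb 2 (q * p a / K) - Real.logb 2 (q/K))^k := by
    intro a
    rw [Fintype.sum_prod_type]
    rw [Finset.sum_congr rfl (fun β _ => hz a β), Finset.sum_add_distrib]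
    have c1 : (∑ β : Fin K, if a = 0 ∧ β = 0 then
        (1-q) * (Real.logb 2 (1-q) - Real.logb 2 ((1-q)/K))^k else 0)
        = if a = 0 then (1-q) * (Real.logb 2 (1-q) - Real.logb 2 ((1-q)/K))^k else 0 := by
      simp only [ite_and, Finset.sum_ite_irrel, Finset.sum_const_zero, Finset.sum_ite_eq',
        Finset.mem_univ, if_true]
    have c2 : (∑ _β : Fin K, (q * p a / K) *
        (Real.logb 2 (q * p a / K) - Real.logb 2 (q/K))^k)
        = q * p a * (Real.logb 2 (q * p a / K) - Real.logb 2 (q/K))^k := by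
      rw [Finset.sum_const, Finset.card_univ, Fintype.card_fin, nsmul_eq_mul]
      field_simp
    rw [c1, c2]
  rw [Finset.sum_congr rfl (fun a _ => hinner a), Finset.sum_add_distrib]
  have c4 : (∑ a : Fin K, if a = 0 then
      (1-q) * (Real.logb 2 (1-q) - Real.logb 2 ((1-q)/K))^k else 0)
      = (1-q) * (Real.logb 2 (1-q) - Real.logb 2 ((1-q)/K))^k := by
    simp only [Finset.sum_ite_eq', Finset.mem_univ, if_true]
  rw [c4]

end Main


/-- Coherent information variance of the flagged state:
`V(R⟩B'Z)_ξ = q V(p) + q(1−q)(log K + H(p))²`, where the coherent information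
variance is `M_2 − M_1²` of `ξ` relative to `𝟙_R ⊗ ξ_{B'Z}`. -/
theorem cohInfoVar_xiFlag (K : ℕ) [NeZero K] (q : ℝ) (hq0 : 0 ≤ q) (hq1 : q ≤ 1)
    (p : Fin K → ℝ) (hp : ∀ ℓ, 0 ≤ p ℓ) (hp1 : ∑ ℓ, p ℓ = 1) :
    relMoment 2 (xiFlag K q p)
        ((1 : Matrix (Fin K) (Fin K) ℂ) ⊗ₖ ptraceFst (xiFlag K q p)) -
      (relMoment 1 (xiFlag K q p)
        ((1 : Matrix (Fin K) (Fin K) ℂ) ⊗ₖ ptraceFst (xiFlag K q p))) ^ 2 =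
      ((q * shannonVar p + q * (1 - q) * (Real.logb 2 K + shannonEnt p) ^ 2 : ℝ) : ℂ) := by
  have hKR : (K:ℝ) ≠ 0 := Nat.cast_ne_zero.mpr (NeZero.ne K)
  rw [relMoment_xiFlag K q p hp1 2, relMoment_xiFlag K q p hp1 1, moment_sum, moment_sum,
    ← Complex.ofReal_pow, ← Complex.ofReal_sub]
  congr 1
  by_cases hq : q = 0
  · subst hq
    simp
  · have hBsum : ∀ kk : ℕ, (∑ a, q * p a *
        (Real.logb 2 (q * p a / K) - Real.logb 2 (q/K))^kk)
        = q * ∑ a, p a * (Real.logb 2 (p a))^kk := by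
      intro kk
      rw [Finset.mul_sum]
      apply Finset.sum_congr rfl
      intro a _
      by_cases hpa : p a = 0
      · simp [hpa]
      · have hB : Real.logb 2 (q * p a / K) - Real.logb 2 (q/K) = Real.logb 2 (p a) := by
          rw [Real.logb_div (mul_ne_zero hq hpa) hKR, Real.logb_mul hq hpa,
            Real.logb_div hq hKR]
          ring
        rw [hB]
        ring
    rw [hBsum 2, hBsum 1]
    have hH : shannonEnt p = -∑ a, p a * Real.logb 2 (p a) := rfl
    have hV : shannonVar p = (∑ a, p a * (Real.logb 2 (p a))^2)
        - (∑ a, p a * Real.logb 2 (p a))^2 := by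
      rw [shannonVar]
      have hterm : ∀ a, p a * (-Real.logb 2 (p a) - shannonEnt p)^2
          = p a * (Real.logb 2 (p a))^2
            + (2 * shannonEnt p) * (p a * Real.logb 2 (p a))
            + (shannonEnt p)^2 * p a := by
        intro a
        ring
      rw [Finset.sum_congr rfl (fun a _ => hterm a), Finset.sum_add_distrib,
        Finset.sum_add_distrib, ← Finset.mul_sum, ← Finset.mul_sum, hp1, hH]
      ring
    rw [hV, hH]
    by_cases hq1' : q = 1
    · subst hq1'
      norm_num
    · have hA : Real.logb 2 (1-q) - Real.logb 2 ((1-q)/K) = Real.logb 2 K := by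
        rw [Real.logb_div (sub_ne_zero.mpr (fun h => hq1' h.symm)) hKR]
        ring
      rw [hA]
      ring
end

section
/- For α ∈ (0,1)∪(1,∞), K ∈ ℕ, q ∈ [0,1], and a probability distribution (p_ℓ)_{ℓ=0}^{K−1}, the Petz–Rényi coherent information of the flagged state ξ_{RB'Z} = (1−q)Φ^K⊗|0⟩⟨0| + qΣ_ℓ p_ℓ Φ̄^{K,ℓ}⊗|1⟩⟨1| equals I_α(R⟩B'Z)_ξ = (α/(α−1)) log( q (Σ_ℓ p_ℓ^α)^{1/α} + (1−q) K^{(α−1)/α} ). -/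
open Matrix Kronecker BigOperators
open scoped ComplexOrder

/-- Real power of a Hermitian matrix via spectral decomposition (taken on the
support: zero eigenvalues are mapped to zero for nonzero exponents).
Returns `0` on non-Hermitian inputs. -/
noncomputable def matRpow {n : Type*} [Fintype n] [DecidableEq n]
    (A : Matrix n n ℂ) (t : ℝ) : Matrix n n ℂ :=
  if hA : A.IsHermitian then
    (hA.eigenvectorUnitary : Matrix n n ℂ) *
      Matrix.diagonal (fun i => ((hA.eigenvalues i ^ t : ℝ) : ℂ)) *
      (star (hA.eigenvectorUnitary : Matrix n n ℂ))
  else 0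

/-- The Petz–Rényi coherent information
`I_α(A⟩B)_ρ = (α/(α−1)) log Tr[(Tr_A[ρ^α])^{1/α}]` of a bipartite state,
where the partial trace is over the first tensor factor. -/
noncomputable def petzCohInfo {A B : Type*} [Fintype A] [DecidableEq A]
    [Fintype B] [DecidableEq B] (α : ℝ)
    (ρ : Matrix (A × B) (A × B) ℂ) : ℝ :=
  (α / (α - 1)) *
    Real.logb 2 ((matRpow (ptraceFst (matRpow ρ α)) (1 / α)).trace.re)
/-! ### Auxiliary lemmas -/

lemma matRpow_conj {n : Type*} [Fintype n] [DecidableEq n]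
    (U : Matrix n n ℂ) (hU : U ∈ Matrix.unitaryGroup n ℂ) (d : n → ℝ) (t : ℝ) :
    matRpow (U * Matrix.diagonal (fun i => (d i : ℂ)) * star U) t
      = U * Matrix.diagonal (fun i => ((d i ^ t : ℝ) : ℂ)) * star U := by
  have hUU : star U * U = 1 := (Matrix.mem_unitaryGroup_iff'.mp hU)
  have hUU' : U * star U = 1 := (Matrix.mem_unitaryGroup_iff.mp hU)
  set A := U * Matrix.diagonal (fun i => (d i : ℂ)) * star U with hAdef
  have hA : A.IsHermitian := by
    have : A = U * Matrix.diagonal (fun i => (d i : ℂ)) * Uᴴ := rfl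
    rw [this]
    apply Matrix.isHermitian_mul_mul_conjTranspose
    exact Matrix.isHermitian_diagonal_iff.mpr (fun i => Complex.conj_ofReal (d i))
  rw [matRpow, dif_pos hA]
  set V := (hA.eigenvectorUnitary : Matrix n n ℂ) with hVdef
  have hVV : star V * V = 1 := Matrix.mem_unitaryGroup_iff'.mp hA.eigenvectorUnitary.2
  have hVV' : V * star V = 1 := Matrix.mem_unitaryGroup_iff.mp hA.eigenvectorUnitary.2
  set ev := hA.eigenvalues with hevdef
  have hspec : A = V * Matrix.diagonal (fun i => ((ev i : ℝ) : ℂ)) * star V := by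
    simpa [Function.comp_def] using hA.spectral_theorem
  set W := star V * U with hWdef
  have hEW : Matrix.diagonal (fun i => ((ev i : ℝ) : ℂ)) * W
      = W * Matrix.diagonal (fun i => (d i : ℂ)) := by
    have h1 : star V * A * V = Matrix.diagonal (fun i => ((ev i : ℝ) : ℂ)) := by
      rw [hspec]; rw [show star V * (V * Matrix.diagonal (fun i => ((ev i : ℝ):ℂ)) * star V) * V
        = (star V * V) * Matrix.diagonal (fun i => ((ev i : ℝ):ℂ)) * (star V * V) by
          simp only [Matrix.mul_assoc]]
      rw [hVV]; simp
    calc Matrix.diagonal (fun i => ((ev i : ℝ) : ℂ)) * W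
        = (star V * A * V) * (star V * U) := by rw [h1]
      _ = star V * A * (V * star V) * U := by simp only [Matrix.mul_assoc]
      _ = star V * A * U := by rw [hVV']; simp [Matrix.mul_assoc]
      _ = star V * (U * Matrix.diagonal (fun i => (d i : ℂ)) * star U) * U := by rw [hAdef]
      _ = star V * U * Matrix.diagonal (fun i => (d i : ℂ)) * (star U * U) := by
          simp only [Matrix.mul_assoc]
      _ = W * Matrix.diagonal (fun i => (d i : ℂ)) := by
          rw [hUU]; simp [hWdef, Matrix.mul_assoc]
  have hEW' : Matrix.diagonal (fun i => ((ev i ^ t : ℝ) : ℂ)) * W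
      = W * Matrix.diagonal (fun i => ((d i ^ t : ℝ) : ℂ)) := by
    ext i j
    have h2 : ((ev i : ℝ) : ℂ) * W i j = W i j * ((d j : ℝ) : ℂ) := by
      have := congrFun (congrFun hEW i) j
      simpa [Matrix.diagonal_mul, Matrix.mul_diagonal] using this
    simp only [Matrix.diagonal_mul, Matrix.mul_diagonal]
    by_cases hw : W i j = 0
    · simp [hw]
    · have hc : ((ev i : ℝ) : ℂ) = ((d j : ℝ) : ℂ) :=
        mul_right_cancel₀ hw (by rw [h2, mul_comm])
      have hev : ev i = d j := by exact_mod_cast hc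
      rw [hev, mul_comm]
  have hUVW : V * W = U := by
    rw [hWdef, ← Matrix.mul_assoc, hVV', Matrix.one_mul]
  have hWW' : W * star W = 1 := by
    rw [hWdef, Matrix.star_mul, star_star]
    calc star V * U * (star U * V) = star V * (U * star U) * V := by simp only [Matrix.mul_assoc]
      _ = 1 := by rw [hUU']; simp [hVV]
  calc V * Matrix.diagonal (fun i => ((ev i ^ t : ℝ) : ℂ)) * star V
      = V * Matrix.diagonal (fun i => ((ev i ^ t : ℝ) : ℂ)) * (W * star W) * star V := by
        rw [hWW', Matrix.mul_one]
    _ = V * (Matrix.diagonal (fun i => ((ev i ^ t : ℝ) : ℂ)) * W) * (star W * star V) := by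
        simp only [Matrix.mul_assoc]
    _ = V * (W * Matrix.diagonal (fun i => ((d i ^ t : ℝ) : ℂ))) * (star W * star V) := by
        rw [hEW']
    _ = U * Matrix.diagonal (fun i => ((d i ^ t : ℝ) : ℂ)) * star U := by
        have hsw : star W * star V = star U := by rw [← Matrix.star_mul, hUVW]
        rw [hsw, ← Matrix.mul_assoc, hUVW]

lemma matRpow_diagonal {n : Type*} [Fintype n] [DecidableEq n] (d : n → ℝ) (t : ℝ) :
    matRpow (Matrix.diagonal (fun i => ((d i : ℝ) : ℂ))) t
      = Matrix.diagonal (fun i => ((d i ^ t : ℝ) : ℂ)) := by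
  have h1 : (1 : Matrix n n ℂ) ∈ Matrix.unitaryGroup n ℂ := by
    rw [Matrix.mem_unitaryGroup_iff]; simp
  have := matRpow_conj (1 : Matrix n n ℂ) h1 d t
  simpa using this

lemma maxEnt_isHermitian (K : ℕ) : (maxEnt K).IsHermitian := by
  ext p q
  simp only [maxEnt, Matrix.conjTranspose_apply, Matrix.of_apply]
  by_cases h1 : p.1 = p.2 <;> by_cases h2 : q.1 = q.2 <;> simp [h1, h2]

lemma maxEnt_mul_self (K : ℕ) [NeZero K] : maxEnt K * maxEnt K = maxEnt K := by
  have hK : (K : ℂ) ≠ 0 := Nat.cast_ne_zero.mpr (NeZero.ne K)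
  ext p q
  rcases p with ⟨i, j⟩; rcases q with ⟨i', j'⟩
  simp only [Matrix.mul_apply, maxEnt, Matrix.of_apply, Fintype.sum_prod_type]
  by_cases h1 : i = j <;> by_cases h2 : i' = j' <;>
    simp [h1, h2, ite_and, Finset.sum_ite_eq, Finset.mul_sum, mul_ite, ite_mul,
      Finset.sum_const, Finset.card_univ]
  field_simp

lemma eigenvalues_of_idem {n : Type*} [Fintype n] [DecidableEq n] {A : Matrix n n ℂ}
    (hA : A.IsHermitian) (h : A * A = A) (i : n) :
    hA.eigenvalues i = 0 ∨ hA.eigenvalues i = 1 := by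
  set V := (hA.eigenvectorUnitary : Matrix n n ℂ) with hVdef
  have hVV : star V * V = 1 := Matrix.mem_unitaryGroup_iff'.mp hA.eigenvectorUnitary.2
  have hVV' : V * star V = 1 := Matrix.mem_unitaryGroup_iff.mp hA.eigenvectorUnitary.2
  set D := Matrix.diagonal (fun i => ((hA.eigenvalues i : ℝ) : ℂ)) with hDdef
  have hspec : A = V * D * star V := by
    simpa [Function.comp_def] using hA.spectral_theorem
  have hD : star V * A * V = D := by
    rw [hspec, show star V * (V * D * star V) * V = (star V * V) * D * (star V * V) by
      simp only [Matrix.mul_assoc]]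
    rw [hVV]; simp
  have hDD : D * D = D := by
    calc D * D = (star V * A * V) * (star V * A * V) := by rw [hD]
      _ = star V * (A * (V * star V) * A) * V := by simp only [Matrix.mul_assoc]
      _ = star V * (A * A) * V := by rw [hVV']; simp [Matrix.mul_assoc]
      _ = D := by rw [h, hD]
  have h2 := congrFun (congrFun hDD i) i
  simp only [hDdef, Matrix.diagonal_mul_diagonal, Matrix.diagonal_apply_eq] at h2
  have h3 : hA.eigenvalues i * hA.eigenvalues i = hA.eigenvalues i := by exact_mod_cast h2
  have h4 : hA.eigenvalues i * (hA.eigenvalues i - 1) = 0 := by linear_combination h3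
  rcases mul_eq_zero.mp h4 with h5 | h5
  · exact Or.inl h5
  · exact Or.inr (by linarith)

lemma star_kron {l m n p : Type*} (A : Matrix l m ℂ) (B : Matrix n p ℂ) :
    (A ⊗ₖ B)ᴴ = Aᴴ ⊗ₖ Bᴴ := by
  ext i j
  simp [Matrix.conjTranspose_apply, Matrix.kroneckerMap_apply, star_mul', mul_comm]

lemma E00_star : (Matrix.single (0 : Fin 2) (0 : Fin 2) (1 : ℂ))ᴴ
    = Matrix.single (0 : Fin 2) (0 : Fin 2) (1 : ℂ) := by
  ext i j
  simp [Matrix.conjTranspose_apply, Matrix.single, and_comm]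

lemma E11_star : (Matrix.single (1 : Fin 2) (1 : Fin 2) (1 : ℂ))ᴴ
    = Matrix.single (1 : Fin 2) (1 : Fin 2) (1 : ℂ) := by
  ext i j
  simp [Matrix.conjTranspose_apply, Matrix.single, and_comm]

lemma E00_add_E11 : Matrix.single (0 : Fin 2) (0 : Fin 2) (1 : ℂ)
    + Matrix.single (1 : Fin 2) (1 : Fin 2) (1 : ℂ) = 1 := by
  ext i j
  fin_cases i <;> fin_cases j <;> simp [Matrix.single, Matrix.one_apply]

noncomputable def E00 : Matrix (Fin 2) (Fin 2) ℂ :=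
  Matrix.single (0 : Fin 2) (0 : Fin 2) (1 : ℂ)
noncomputable def E11 : Matrix (Fin 2) (Fin 2) ℂ :=
  Matrix.single (1 : Fin 2) (1 : Fin 2) (1 : ℂ)

lemma E00_mul_E00 : E00 * E00 = E00 := by
  simp [E00, Matrix.single_mul_single_same]
lemma E11_mul_E11 : E11 * E11 = E11 := by
  simp [E11, Matrix.single_mul_single_same]
lemma E00_mul_E11 : E00 * E11 = 0 := by
  ext i j
  fin_cases i <;> fin_cases j <;>
    simp [E00, E11, Matrix.mul_apply, Fin.sum_univ_two, Matrix.single]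
lemma E11_mul_E00 : E11 * E00 = 0 := by
  ext i j
  fin_cases i <;> fin_cases j <;>
    simp [E00, E11, Matrix.mul_apply, Fin.sum_univ_two, Matrix.single]
lemma E_add : E00 + E11 = 1 := E00_add_E11
lemma E00_conjT : E00ᴴ = E00 := E00_star
lemma E11_conjT : E11ᴴ = E11 := E11_star

noncomputable def blockU (K : ℕ) : Matrix ((Fin K × Fin K) × Fin 2) ((Fin K × Fin K) × Fin 2) ℂ :=
  ((maxEnt_isHermitian K).eigenvectorUnitary : Matrix (Fin K × Fin K) (Fin K × Fin K) ℂ) ⊗ₖ E00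
    + 1 ⊗ₖ E11

lemma star_blockU (K : ℕ) : star (blockU K)
    = (star ((maxEnt_isHermitian K).eigenvectorUnitary : Matrix (Fin K × Fin K) (Fin K × Fin K) ℂ))
        ⊗ₖ E00 + 1 ⊗ₖ E11 := by
  rw [Matrix.star_eq_conjTranspose, blockU, Matrix.conjTranspose_add, star_kron, star_kron,
    E00_conjT, E11_conjT, Matrix.conjTranspose_one, Matrix.star_eq_conjTranspose]

lemma blockU_mem (K : ℕ) : blockU K ∈ Matrix.unitaryGroup ((Fin K × Fin K) × Fin 2) ℂ := by
  set V := ((maxEnt_isHermitian K).eigenvectorUnitary : Matrix (Fin K × Fin K) (Fin K × Fin K) ℂ)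
    with hV
  have hVV' : V * star V = 1 := Matrix.mem_unitaryGroup_iff.mp (maxEnt_isHermitian K).eigenvectorUnitary.2
  rw [Matrix.mem_unitaryGroup_iff, star_blockU, blockU]
  simp only [Matrix.add_mul, Matrix.mul_add, ← Matrix.mul_kronecker_mul, E00_mul_E00,
    E11_mul_E11, E00_mul_E11, E11_mul_E00, Matrix.kronecker_zero, Matrix.mul_one,
    Matrix.one_mul, hVV', add_zero, zero_add]
  erw [hVV']
  rw [← Matrix.kronecker_add, E_add, Matrix.one_kronecker_one]

lemma diagonal_split {m : Type*} [Fintype m] [DecidableEq m] (a b : m → ℂ) :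
    Matrix.diagonal (fun pz : m × Fin 2 => if pz.2 = 0 then a pz.1 else b pz.1)
      = Matrix.diagonal a ⊗ₖ E00 + Matrix.diagonal b ⊗ₖ E11 := by
  ext ⟨p, z⟩ ⟨p', z'⟩
  simp only [Matrix.diagonal_apply, Matrix.kroneckerMap_apply, Matrix.add_apply, E00, E11,
    Matrix.single, Prod.mk.injEq, Matrix.of_apply]
  fin_cases z <;> fin_cases z' <;> by_cases hp : p = p' <;> simp [hp]

lemma keyConj (K : ℕ) [NeZero K] (c : ℝ) (f : Fin K × Fin K → ℝ) :
    blockU K * Matrix.diagonal (fun pz : (Fin K × Fin K) × Fin 2 =>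
        ((if pz.2 = 0 then c * (maxEnt_isHermitian K).eigenvalues pz.1 else f pz.1 : ℝ) : ℂ))
      * star (blockU K)
    = (c : ℂ) • (maxEnt K ⊗ₖ E00)
      + (Matrix.diagonal fun p : Fin K × Fin K => ((f p : ℝ) : ℂ)) ⊗ₖ E11 := by
  set V := ((maxEnt_isHermitian K).eigenvectorUnitary : Matrix (Fin K × Fin K) (Fin K × Fin K) ℂ)
    with hV
  have hsplit : Matrix.diagonal (fun pz : (Fin K × Fin K) × Fin 2 =>
        ((if pz.2 = 0 then c * (maxEnt_isHermitian K).eigenvalues pz.1 else f pz.1 : ℝ) : ℂ))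
      = Matrix.diagonal (fun p : Fin K × Fin K =>
          ((c * (maxEnt_isHermitian K).eigenvalues p : ℝ) : ℂ)) ⊗ₖ E00
        + Matrix.diagonal (fun p : Fin K × Fin K => ((f p : ℝ) : ℂ)) ⊗ₖ E11 := by
    have hfun : (fun pz : (Fin K × Fin K) × Fin 2 =>
        ((if pz.2 = 0 then c * (maxEnt_isHermitian K).eigenvalues pz.1 else f pz.1 : ℝ) : ℂ))
        = fun pz : (Fin K × Fin K) × Fin 2 =>
          if pz.2 = 0 then ((c * (maxEnt_isHermitian K).eigenvalues pz.1 : ℝ) : ℂ)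
          else ((f pz.1 : ℝ) : ℂ) := by
      funext pz; split_ifs <;> rfl
    rw [hfun]
    exact diagonal_split (fun p => ((c * (maxEnt_isHermitian K).eigenvalues p : ℝ) : ℂ))
      (fun p => ((f p : ℝ) : ℂ))
  rw [hsplit, star_blockU, blockU]
  simp only [Matrix.add_mul, Matrix.mul_add, ← Matrix.mul_kronecker_mul, E00_mul_E00,
    E11_mul_E11, E00_mul_E11, E11_mul_E00, Matrix.kronecker_zero, Matrix.mul_one,
    Matrix.one_mul, add_zero, zero_add]
  congr 1
  have hcdiag : Matrix.diagonal (fun p : Fin K × Fin K =>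
      ((c * (maxEnt_isHermitian K).eigenvalues p : ℝ) : ℂ))
      = (c : ℂ) • Matrix.diagonal (fun p : Fin K × Fin K =>
          (((maxEnt_isHermitian K).eigenvalues p : ℝ) : ℂ)) := by
    ext p p'
    by_cases h : p = p' <;>
      simp [Matrix.diagonal_apply, h, Complex.ofReal_mul, Matrix.smul_apply]
  rw [hcdiag, Matrix.mul_smul, Matrix.smul_mul]
  have hspec : V * Matrix.diagonal (fun p : Fin K × Fin K =>
      (((maxEnt_isHermitian K).eigenvalues p : ℝ) : ℂ)) * star V = maxEnt K := by
    simpa [Function.comp_def] using (maxEnt_isHermitian K).spectral_theorem.symm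
  rw [hspec, Matrix.smul_kronecker]

lemma corr_sum (K : ℕ) [NeZero K] (q : ℝ) (p : Fin K → ℝ) :
    (q : ℂ) • ∑ ℓ, (p ℓ : ℂ) • (corrBar K ℓ ⊗ₖ E11)
    = (Matrix.diagonal fun pr : Fin K × Fin K => ((q * p (pr.2 - pr.1) / K : ℝ) : ℂ)) ⊗ₖ E11 := by
  ext x y
  rcases x with ⟨⟨i, j⟩, z⟩
  rcases y with ⟨⟨i', j'⟩, z'⟩
  simp only [Matrix.smul_apply, Matrix.sum_apply, Matrix.kroneckerMap_apply, corrBar,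
    Matrix.of_apply, Matrix.diagonal_apply, smul_eq_mul]
  by_cases h : ((i, j) : Fin K × Fin K) = (i', j')
  · have hcond : ∀ ℓ : Fin K, (j = i + ℓ) = (ℓ = j - i) := by
      intro ℓ
      apply propext
      rw [eq_comm, ← eq_sub_iff_add_eq']
    simp only [h, if_pos rfl, true_and, hcond]
    rw [Finset.mul_sum]
    rw [Finset.sum_eq_single (j - i)]
    · simp only [if_pos rfl]
      push_cast
      ring
    · intro b _ hb
      simp [hb]
    · intro hmem
      exact absurd (Finset.mem_univ _) hmem
  · simp [h]

lemma xiFlag_eq_s9 (K : ℕ) [NeZero K] (q : ℝ) (p : Fin K → ℝ) :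
    xiFlag K q p = Matrix.reindex (Equiv.prodAssoc (Fin K) (Fin K) (Fin 2))
      (Equiv.prodAssoc (Fin K) (Fin K) (Fin 2))
      (((1 - q : ℝ) : ℂ) • (maxEnt K ⊗ₖ E00)
        + (Matrix.diagonal fun pr : Fin K × Fin K =>
            ((q * p (pr.2 - pr.1) / K : ℝ) : ℂ)) ⊗ₖ E11) := by
  rw [xiFlag,
    show Matrix.single (0 : Fin 2) (0 : Fin 2) (1 : ℂ) = E00 from rfl,
    show Matrix.single (1 : Fin 2) (1 : Fin 2) (1 : ℂ) = E11 from rfl,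
    corr_sum K q p]

lemma Utot_mem (K : ℕ) [NeZero K] :
    (Matrix.reindex (Equiv.prodAssoc (Fin K) (Fin K) (Fin 2))
      (Equiv.prodAssoc (Fin K) (Fin K) (Fin 2)) (blockU K))
      ∈ Matrix.unitaryGroup (Fin K × (Fin K × Fin 2)) ℂ := by
  rw [Matrix.mem_unitaryGroup_iff]
  rw [Matrix.reindex_apply, Matrix.star_eq_conjTranspose, Matrix.conjTranspose_submatrix,
    Matrix.submatrix_mul_equiv, ← Matrix.star_eq_conjTranspose,
    Matrix.mem_unitaryGroup_iff.mp (blockU_mem K), Matrix.submatrix_one_equiv]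

lemma keyConj_reindex (K : ℕ) [NeZero K] (c : ℝ) (g : Fin K × Fin K → ℝ) :
    (Matrix.reindex (Equiv.prodAssoc (Fin K) (Fin K) (Fin 2))
        (Equiv.prodAssoc (Fin K) (Fin K) (Fin 2)) (blockU K)) *
      Matrix.diagonal (fun x : Fin K × (Fin K × Fin 2) =>
        ((if x.2.2 = 0 then c * (maxEnt_isHermitian K).eigenvalues (x.1, x.2.1)
          else g (x.1, x.2.1) : ℝ) : ℂ)) *
      star (Matrix.reindex (Equiv.prodAssoc (Fin K) (Fin K) (Fin 2))
        (Equiv.prodAssoc (Fin K) (Fin K) (Fin 2)) (blockU K))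
    = Matrix.reindex (Equiv.prodAssoc (Fin K) (Fin K) (Fin 2))
        (Equiv.prodAssoc (Fin K) (Fin K) (Fin 2))
        ((c : ℂ) • (maxEnt K ⊗ₖ E00)
          + (Matrix.diagonal fun pr : Fin K × Fin K => ((g pr : ℝ) : ℂ)) ⊗ₖ E11) := by
  set e := Equiv.prodAssoc (Fin K) (Fin K) (Fin 2) with he
  have hdiag : Matrix.diagonal (fun x : Fin K × (Fin K × Fin 2) =>
        ((if x.2.2 = 0 then c * (maxEnt_isHermitian K).eigenvalues (x.1, x.2.1)
          else g (x.1, x.2.1) : ℝ) : ℂ))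
      = (Matrix.diagonal (fun pz : (Fin K × Fin K) × Fin 2 =>
          ((if pz.2 = 0 then c * (maxEnt_isHermitian K).eigenvalues pz.1
            else g pz.1 : ℝ) : ℂ))).submatrix e.symm e.symm := by
    rw [Matrix.submatrix_diagonal_equiv]
    rfl
  rw [hdiag, Matrix.reindex_apply, Matrix.star_eq_conjTranspose,
    Matrix.conjTranspose_submatrix, Matrix.submatrix_mul_equiv, Matrix.submatrix_mul_equiv,
    ← Matrix.star_eq_conjTranspose, keyConj K c g, Matrix.reindex_apply]

lemma ptrace_reindex (K : ℕ) [NeZero K] (c : ℝ) (f₀ : Fin K → ℝ) :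
    ptraceFst (Matrix.reindex (Equiv.prodAssoc (Fin K) (Fin K) (Fin 2))
        (Equiv.prodAssoc (Fin K) (Fin K) (Fin 2))
        ((c : ℂ) • (maxEnt K ⊗ₖ E00)
          + (Matrix.diagonal fun pr : Fin K × Fin K => ((f₀ (pr.2 - pr.1) : ℝ) : ℂ)) ⊗ₖ E11))
    = Matrix.diagonal (fun jz : Fin K × Fin 2 =>
        if jz.2 = 0 then ((c / K : ℝ) : ℂ) else ((∑ ℓ, f₀ ℓ : ℝ) : ℂ)) := by
  have hK : (K : ℂ) ≠ 0 := Nat.cast_ne_zero.mpr (NeZero.ne K)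
  ext ⟨j, z⟩ ⟨j', z'⟩
  simp only [ptraceFst, Matrix.of_apply, Matrix.reindex_apply, Matrix.submatrix_apply,
    Matrix.add_apply, Matrix.smul_apply, Matrix.kroneckerMap_apply, maxEnt,
    Matrix.diagonal_apply, Equiv.prodAssoc_symm_apply, smul_eq_mul, E00, E11,
    Matrix.single]
  fin_cases z <;> fin_cases z' <;> by_cases hj : j = j' <;>
    simp [hj, Prod.ext_iff, Finset.sum_ite_eq', Finset.mul_sum, div_eq_mul_inv,
      Finset.sum_const, Finset.card_univ]
  · refine Finset.sum_eq_zero fun x _ => ?_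
    rw [if_neg]
    rintro ⟨rfl, rfl⟩
    exact hj rfl
  · exact Fintype.sum_equiv (Equiv.subLeft j') _ _ (fun x => rfl)

/-- Petz–Rényi coherent information of the flagged state:
`I_α(R⟩B'Z)_ξ = (α/(α−1)) log( q (Σ_ℓ p_ℓ^α)^{1/α} + (1−q) K^{(α−1)/α} )`
for all `α ∈ (0,1) ∪ (1,∞)`. -/
theorem petzCohInfo_xiFlag (K : ℕ) [NeZero K] (q : ℝ) (hq0 : 0 ≤ q) (hq1 : q ≤ 1)
    (p : Fin K → ℝ) (hp : ∀ ℓ, 0 ≤ p ℓ) (hp1 : ∑ ℓ, p ℓ = 1)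
    (α : ℝ) (hα : α ∈ Set.Ioo (0 : ℝ) 1 ∪ Set.Ioi (1 : ℝ)) :
    petzCohInfo α (xiFlag K q p) =
      (α / (α - 1)) *
        Real.logb 2
          (q * (∑ ℓ, p ℓ ^ α) ^ (1 / α) + (1 - q) * (K : ℝ) ^ ((α - 1) / α)) := by
  have hα0 : 0 < α := by
    rcases hα with h | h
    · exact h.1
    · have := Set.mem_Ioi.mp h; linarith
  have hαne : α ≠ 0 := ne_of_gt hα0
  have hK0 : (0 : ℝ) < K := by
    have := NeZero.pos K
    exact_mod_cast this
  have h1q : (0 : ℝ) ≤ 1 - q := by linarith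
  set e := Equiv.prodAssoc (Fin K) (Fin K) (Fin 2) with he
  set U := Matrix.reindex e e (blockU K) with hU
  set dr : Fin K × (Fin K × Fin 2) → ℝ := fun x =>
    if x.2.2 = 0 then (1 - q) * (maxEnt_isHermitian K).eigenvalues (x.1, x.2.1)
    else q * p (x.2.1 - x.1) / K with hdrdef
  have hξ : xiFlag K q p = U * Matrix.diagonal (fun x => ((dr x : ℝ) : ℂ)) * star U :=
    (xiFlag_eq_s9 K q p).trans
      (keyConj_reindex K (1 - q) (fun pr => q * p (pr.2 - pr.1) / K)).symm
  have h1 : matRpow (xiFlag K q p) α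
      = U * Matrix.diagonal (fun x => ((dr x ^ α : ℝ) : ℂ)) * star U := by
    rw [hξ]; exact matRpow_conj U (Utot_mem K) dr α
  have h2 : matRpow (xiFlag K q p) α
      = Matrix.reindex e e (((((1 - q) ^ α : ℝ)) : ℂ) • (maxEnt K ⊗ₖ E00)
          + (Matrix.diagonal fun pr : Fin K × Fin K =>
              (((q * p (pr.2 - pr.1) / K) ^ α : ℝ) : ℂ)) ⊗ₖ E11) := by
    rw [h1]
    refine Eq.trans ?_
      (keyConj_reindex K ((1 - q) ^ α) (fun pr => (q * p (pr.2 - pr.1) / K) ^ α))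
    have hfun : (fun x : Fin K × (Fin K × Fin 2) => ((dr x ^ α : ℝ) : ℂ))
        = fun x : Fin K × (Fin K × Fin 2) =>
          ((if x.2.2 = 0 then (1 - q) ^ α * (maxEnt_isHermitian K).eigenvalues (x.1, x.2.1)
            else (q * p (x.2.1 - x.1) / K) ^ α : ℝ) : ℂ) := by
      funext x
      rcases x with ⟨i, j, z⟩
      have hx : dr (i, j, z) ^ α
          = (if z = 0 then (1 - q) ^ α * (maxEnt_isHermitian K).eigenvalues (i, j)
            else (q * p (j - i) / K) ^ α) := by
        by_cases hz : z = 0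
        · subst hz
          simp only [hdrdef, if_pos rfl]
          rcases eigenvalues_of_idem (maxEnt_isHermitian K) (maxEnt_mul_self K) (i, j) with h | h
          · rw [h, mul_zero, Real.zero_rpow hαne, mul_zero]; simp
          · rw [h, mul_one, mul_one]; simp
        · simp only [hdrdef, if_neg hz]
      rw [hx]
    rw [hfun]
  have h3 : ptraceFst (matRpow (xiFlag K q p) α)
      = Matrix.diagonal (fun jz : Fin K × Fin 2 =>
          if jz.2 = 0 then (((1 - q) ^ α / K : ℝ) : ℂ)
          else ((∑ ℓ, (q * p ℓ / K) ^ α : ℝ) : ℂ)) := by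
    rw [h2]; exact ptrace_reindex K ((1 - q) ^ α) (fun ℓ => (q * p ℓ / K) ^ α)
  set gr : Fin K × Fin 2 → ℝ := fun jz =>
    if jz.2 = 0 then (1 - q) ^ α / K else ∑ ℓ, (q * p ℓ / K) ^ α with hgrdef
  have hg : (fun jz : Fin K × Fin 2 =>
        if jz.2 = 0 then (((1 - q) ^ α / K : ℝ) : ℂ)
        else ((∑ ℓ, (q * p ℓ / K) ^ α : ℝ) : ℂ))
      = fun jz => ((gr jz : ℝ) : ℂ) := by
    funext jz
    simp only [hgrdef]
    split_ifs <;> rfl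
  have h4 : matRpow (ptraceFst (matRpow (xiFlag K q p) α)) (1 / α)
      = Matrix.diagonal (fun jz => ((gr jz ^ (1 / α) : ℝ) : ℂ)) := by
    rw [h3, hg]; exact matRpow_diagonal gr (1 / α)
  have h5 : (matRpow (ptraceFst (matRpow (xiFlag K q p) α)) (1 / α)).trace.re
      = ∑ jz : Fin K × Fin 2, gr jz ^ (1 / α) := by
    rw [h4, Matrix.trace_diagonal]
    norm_cast
  have h6 : ∑ jz : Fin K × Fin 2, gr jz ^ (1 / α)
      = K * (((1 - q) ^ α / K) ^ (1 / α))
        + K * ((∑ ℓ, (q * p ℓ / K) ^ α) ^ (1 / α)) := by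
    simp only [Fintype.sum_prod_type, Fin.sum_univ_two, hgrdef]
    norm_num
  have hSnn : (0 : ℝ) ≤ ∑ ℓ, p ℓ ^ α :=
    Finset.sum_nonneg fun ℓ _ => Real.rpow_nonneg (hp ℓ) α
  have hT1 : (K : ℝ) * (((1 - q) ^ α / K) ^ (1 / α)) = (1 - q) * (K : ℝ) ^ ((α - 1) / α) := by
    rw [Real.div_rpow (Real.rpow_nonneg h1q α) hK0.le]
    rw [← Real.rpow_mul h1q, mul_one_div, div_self hαne, Real.rpow_one]
    rw [show (α - 1) / α = 1 - 1 / α by rw [sub_div, div_self hαne]]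
    rw [Real.rpow_sub hK0, Real.rpow_one]
    field_simp
  have hT2 : (K : ℝ) * ((∑ ℓ, (q * p ℓ / K) ^ α) ^ (1 / α))
      = q * (∑ ℓ, p ℓ ^ α) ^ (1 / α) := by
    have hterm : ∀ ℓ : Fin K, (q * p ℓ / K) ^ α = (q / K) ^ α * p ℓ ^ α := by
      intro ℓ
      rw [show q * p ℓ / K = (q / K) * p ℓ by ring]
      exact Real.mul_rpow (div_nonneg hq0 hK0.le) (hp ℓ)
    simp only [hterm]
    rw [← Finset.mul_sum]
    rw [Real.mul_rpow (Real.rpow_nonneg (div_nonneg hq0 hK0.le) α) hSnn]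
    rw [← Real.rpow_mul (div_nonneg hq0 hK0.le), mul_one_div, div_self hαne, Real.rpow_one]
    field_simp
  rw [petzCohInfo, h5, h6, hT1, hT2, add_comm]
end

section
/- For a classical–quantum state ρ_XAB = Σ_x p(x)|x⟩⟨x|_X ⊗ ρ_AB^x and α ∈ (0,1)∪(1,∞), the Petz–Rényi coherent information with the classical register on the conditioning side satisfies I_α(A⟩BX)_ρ = (α/(α−1)) log Σ_x p(x) Tr[(Tr_A[(ρ_AB^x)^α])^{1/α}]. -/
open Matrix Kronecker BigOperators
open scoped ComplexOrder

/-- Reassociation `X × (A × B) ≃ A × (X × B)` placing the traced-out system `A`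
in the first factor. -/
def cqAssoc (X A B : Type*) : X × (A × B) ≃ A × (X × B) where
  toFun t := (t.2.1, (t.1, t.2.2))
  invFun t := (t.2.1, (t.1, t.2.2))
  left_inv := fun _ => rfl
  right_inv := fun _ => rfl


section PetzAux

open Polynomial

variable {n : Type*} [Fintype n] [DecidableEq n]

lemma eval_map_ofReal (q : Polynomial ℝ) (r : ℝ) :
    Polynomial.eval ((r : ℂ)) (q.map (algebraMap ℝ ℂ)) = ((q.eval r : ℝ) : ℂ) := by
  rw [Polynomial.eval_map, ← Complex.coe_algebraMap, Polynomial.eval₂_at_apply,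
    Complex.coe_algebraMap]

lemma aeval_conj (V D : Matrix n n ℂ) (hV : V * star V = 1) (Q : Polynomial ℂ) :
    aeval (V * D * star V) Q = V * aeval D Q * star V := by
  have hV' : star V * V = 1 := mul_eq_one_comm.mp hV
  have hpow : ∀ k : ℕ, (V * D * star V) ^ k = V * D ^ k * star V := by
    intro k
    induction k with
    | zero => simp [hV]
    | succ k ih =>
        rw [pow_succ, ih, pow_succ]
        calc V * D ^ k * star V * (V * D * star V)
            = V * D ^ k * (star V * V) * D * star V := by
              simp only [Matrix.mul_assoc]
          _ = V * (D ^ k * D) * star V := by rw [hV']; simp only [Matrix.mul_assoc, Matrix.mul_one]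
  induction Q using Polynomial.induction_on' with
  | add p q hp hq => simp only [map_add, hp, hq, Matrix.mul_add, Matrix.add_mul]
  | monomial k a =>
      simp only [aeval_monomial, hpow]
      rw [Algebra.commutes a (V * D ^ k * star V), Algebra.commutes a (D ^ k)]
      simp only [Matrix.mul_assoc]
      rw [Algebra.commutes a (star V)]

lemma aeval_diagonal' (c : n → ℂ) (Q : Polynomial ℂ) :
    aeval (Matrix.diagonal c) Q = Matrix.diagonal (fun i => Q.eval (c i)) := by
  have h1 : aeval (Matrix.diagonal c) Q = (Matrix.diagonalAlgHom ℂ) (aeval c Q) := by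
    rw [← Polynomial.aeval_algHom_apply]
    rfl
  rw [h1]
  have h2 : aeval c Q = fun i => Q.eval (c i) := by
    funext i
    have := Polynomial.aeval_algHom_apply (Pi.evalAlgHom ℂ (fun _ : n => ℂ) i) c Q
    simp only [Pi.evalAlgHom_apply] at this
    rw [← this, Polynomial.aeval_def, Polynomial.eval₂_eq_eval_map, Algebra.algebraMap_self,
      Polynomial.map_id]
  rw [h2]
  rfl

lemma matRpow_eq_of_decomp (V : Matrix n n ℂ) (hV : V * star V = 1) (d : n → ℝ) (t : ℝ) :
    matRpow (V * Matrix.diagonal (fun i => (d i : ℂ)) * star V) t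
      = V * Matrix.diagonal (fun i => ((d i ^ t : ℝ) : ℂ)) * star V := by
  have hdiag : (Matrix.diagonal (fun i => (d i : ℂ))).IsHermitian := by
    rw [Matrix.IsHermitian, Matrix.diagonal_conjTranspose]
    simp [Complex.conj_ofReal]
  have hA : (V * Matrix.diagonal (fun i => (d i : ℂ)) * star V).IsHermitian := by
    rw [Matrix.star_eq_conjTranspose]
    exact Matrix.isHermitian_mul_mul_conjTranspose V hdiag
  set A := V * Matrix.diagonal (fun i => (d i : ℂ)) * star V with hAdef
  set U : Matrix n n ℂ := (hA.eigenvectorUnitary : Matrix n n ℂ) with hUdef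
  have hU : U * star U = 1 := Matrix.mem_unitaryGroup_iff.mp hA.eigenvectorUnitary.2
  have hspec : A = U * Matrix.diagonal (fun i => ((hA.eigenvalues i : ℝ) : ℂ)) * star U :=
    hA.spectral_theorem
  set s : Finset ℝ := (Finset.univ.image hA.eigenvalues) ∪ (Finset.univ.image d) with hs
  set q : Polynomial ℝ := Lagrange.interpolate s id (fun r => r ^ t) with hq
  have hqev : ∀ r ∈ s, q.eval r = r ^ t := by
    intro r hr
    have := Lagrange.eval_interpolate_at_node (s := s) (v := id)
      (fun r => r ^ t) (Set.injOn_id _) hr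
    exact this
  set Q : Polynomial ℂ := q.map (algebraMap ℝ ℂ) with hQ
  have key : ∀ (W : Matrix n n ℂ), W * star W = 1 → ∀ (c : n → ℝ),
      aeval (W * Matrix.diagonal (fun i => (c i : ℂ)) * star W) Q
        = W * Matrix.diagonal (fun i => ((q.eval (c i) : ℝ) : ℂ)) * star W := by
    intro W hW c
    rw [aeval_conj W _ hW Q, aeval_diagonal']
    have hfun : (fun i => Q.eval ((c i : ℂ))) = fun i => ((q.eval (c i) : ℝ) : ℂ) := by
      funext i
      exact eval_map_ofReal q (c i)
    rw [hfun]
  have h1 := key U hU hA.eigenvalues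
  rw [← hspec] at h1
  have h2 := key V hV d
  rw [← hAdef] at h2
  have hrw1 : (fun i => ((q.eval (hA.eigenvalues i) : ℝ) : ℂ))
      = fun i => ((hA.eigenvalues i ^ t : ℝ) : ℂ) := by
    funext i
    rw [hqev _ (Finset.mem_union_left _ (Finset.mem_image_of_mem _ (Finset.mem_univ i)))]
  have hrw2 : (fun i => ((q.eval (d i) : ℝ) : ℂ)) = fun i => ((d i ^ t : ℝ) : ℂ) := by
    funext i
    rw [hqev _ (Finset.mem_union_right _ (Finset.mem_image_of_mem _ (Finset.mem_univ i)))]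
  rw [hrw1] at h1
  rw [hrw2] at h2
  have hfin : matRpow A t
      = U * Matrix.diagonal (fun i => ((hA.eigenvalues i ^ t : ℝ) : ℂ)) * star U := by
    rw [matRpow, dif_pos hA]
  rw [hfin, ← h1, h2]

lemma isHermitian_diagonal_ofReal (d : n → ℝ) :
    (Matrix.diagonal (fun i => (d i : ℂ))).IsHermitian :=
  Matrix.isHermitian_diagonal_iff.mpr (fun i => Complex.conj_ofReal (d i))

lemma eigen_mul_star {A : Matrix n n ℂ} (hA : A.IsHermitian) :
    (hA.eigenvectorUnitary : Matrix n n ℂ) * star (hA.eigenvectorUnitary : Matrix n n ℂ) = 1 :=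
  Matrix.mem_unitaryGroup_iff.mp hA.eigenvectorUnitary.2

lemma matRpow_eq' {A : Matrix n n ℂ} (hA : A.IsHermitian) (t : ℝ) :
    matRpow A t = (hA.eigenvectorUnitary : Matrix n n ℂ) *
      Matrix.diagonal (fun i => ((hA.eigenvalues i ^ t : ℝ) : ℂ)) *
      (star (hA.eigenvectorUnitary : Matrix n n ℂ)) := by
  rw [matRpow, dif_pos hA]

lemma matRpow_isHermitian' {A : Matrix n n ℂ} (hA : A.IsHermitian) (t : ℝ) :
    (matRpow A t).IsHermitian := by
  rw [matRpow_eq' hA t, Matrix.star_eq_conjTranspose]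
  exact Matrix.isHermitian_mul_mul_conjTranspose _ (isHermitian_diagonal_ofReal _)

lemma matRpow_posSemidef' {A : Matrix n n ℂ} (hA : A.PosSemidef) (t : ℝ) :
    (matRpow A t).PosSemidef := by
  have he := hA.1
  have hnn : ∀ i, 0 ≤ he.eigenvalues i ^ t := fun i =>
    Real.rpow_nonneg (hA.eigenvalues_nonneg i) t
  set c : n → ℝ := fun i => Real.sqrt (he.eigenvalues i ^ t) with hc
  have hcc : ∀ i, c i * c i = he.eigenvalues i ^ t := fun i => Real.mul_self_sqrt (hnn i)
  have hdm : Matrix.diagonal (fun i => (c i : ℂ)) * Matrix.diagonal (fun i => (c i : ℂ))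
      = Matrix.diagonal (fun i => ((he.eigenvalues i ^ t : ℝ) : ℂ)) := by
    rw [Matrix.diagonal_mul_diagonal]
    exact congrArg Matrix.diagonal (funext fun i => by rw [← hcc i]; push_cast; ring)
  have hsplit : matRpow A t =
      (Matrix.diagonal (fun i => (c i : ℂ)) * star (he.eigenvectorUnitary : Matrix n n ℂ))ᴴ *
      (Matrix.diagonal (fun i => (c i : ℂ)) * star (he.eigenvectorUnitary : Matrix n n ℂ)) := by
    rw [matRpow_eq' he t, Matrix.star_eq_conjTranspose, Matrix.conjTranspose_mul,
      Matrix.conjTranspose_conjTranspose, (isHermitian_diagonal_ofReal c).eq]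
    simp only [Matrix.mul_assoc]
    rw [← Matrix.mul_assoc (Matrix.diagonal _) (Matrix.diagonal _), hdm]
  rw [hsplit]
  exact Matrix.posSemidef_conjTranspose_mul_self _

lemma diagonal_ofReal_mul (c : ℝ) (d : n → ℝ) :
    Matrix.diagonal (fun i => ((c * d i : ℝ) : ℂ))
      = (c : ℂ) • Matrix.diagonal (fun i => ((d i : ℝ) : ℂ)) := by
  ext i j
  rcases eq_or_ne i j with h | h
  · subst h
    simp only [Matrix.diagonal_apply_eq, Matrix.smul_apply, smul_eq_mul]
    push_cast
    ring
  · simp [Matrix.diagonal_apply_ne _ h]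

lemma mul_smul_mul_conj (a : ℂ) (U D W : Matrix n n ℂ) :
    U * (a • D) * W = a • (U * D * W) := by
  rw [Matrix.mul_smul, Matrix.smul_mul]

lemma matRpow_smul' {A : Matrix n n ℂ} (hA : A.PosSemidef) (c : ℝ) (hc : 0 ≤ c) (t : ℝ) :
    matRpow ((c : ℂ) • A) t = ((c ^ t : ℝ) : ℂ) • matRpow A t := by
  have he := hA.1
  have hdec : (c : ℂ) • A = (he.eigenvectorUnitary : Matrix n n ℂ) *
      Matrix.diagonal (fun i => ((c * he.eigenvalues i : ℝ) : ℂ)) *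
      star (he.eigenvectorUnitary : Matrix n n ℂ) := by
    have hspec : A = (he.eigenvectorUnitary : Matrix n n ℂ) *
        Matrix.diagonal (fun i => ((he.eigenvalues i : ℝ) : ℂ)) *
        star (he.eigenvectorUnitary : Matrix n n ℂ) := he.spectral_theorem
    conv_lhs => rw [hspec]
    rw [diagonal_ofReal_mul, mul_smul_mul_conj]
  rw [hdec, matRpow_eq_of_decomp _ (eigen_mul_star he) _ t]
  have hfun : (fun i => (((c * he.eigenvalues i) ^ t : ℝ) : ℂ))
      = fun i => ((c ^ t * he.eigenvalues i ^ t : ℝ) : ℂ) := by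
    funext i
    rw [Real.mul_rpow hc (hA.eigenvalues_nonneg i)]
  rw [hfun, diagonal_ofReal_mul, mul_smul_mul_conj, matRpow_eq' he t]

lemma isHermitian_blockDiagonal' {o m : Type*} [DecidableEq o] [Fintype m] [DecidableEq m]
    (M : o → Matrix m m ℂ) (h : ∀ k, (M k).IsHermitian) :
    (Matrix.blockDiagonal M).IsHermitian := by
  rw [Matrix.IsHermitian, Matrix.blockDiagonal_conjTranspose]
  exact congrArg Matrix.blockDiagonal (funext fun k => (h k).eq)

lemma matRpow_blockDiagonal' {o m : Type*} [Fintype o] [DecidableEq o] [Fintype m] [DecidableEq m]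
    (M : o → Matrix m m ℂ) (h : ∀ k, (M k).IsHermitian) (t : ℝ) :
    matRpow (Matrix.blockDiagonal M) t
      = Matrix.blockDiagonal (fun k => matRpow (M k) t) := by
  set U : o → Matrix m m ℂ := fun k => ((h k).eigenvectorUnitary : Matrix m m ℂ) with hU
  have hdec : Matrix.blockDiagonal M
      = Matrix.blockDiagonal U *
        Matrix.diagonal (fun ik : m × o => (((h ik.2).eigenvalues ik.1 : ℝ) : ℂ)) *
        star (Matrix.blockDiagonal U) := by
    rw [Matrix.star_eq_conjTranspose, Matrix.blockDiagonal_conjTranspose,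
      ← Matrix.blockDiagonal_diagonal (fun k i => (((h k).eigenvalues i : ℝ) : ℂ)),
      ← Matrix.blockDiagonal_mul, ← Matrix.blockDiagonal_mul]
    exact congrArg Matrix.blockDiagonal (funext fun k => (h k).spectral_theorem)
  have hunit : Matrix.blockDiagonal U * star (Matrix.blockDiagonal U) = 1 := by
    rw [Matrix.star_eq_conjTranspose, Matrix.blockDiagonal_conjTranspose,
      ← Matrix.blockDiagonal_mul, ← Matrix.blockDiagonal_one]
    exact congrArg Matrix.blockDiagonal (funext fun k => by
      rw [← Matrix.star_eq_conjTranspose]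
      exact eigen_mul_star (h k))
  rw [hdec, matRpow_eq_of_decomp _ hunit _ t]
  rw [Matrix.star_eq_conjTranspose, Matrix.blockDiagonal_conjTranspose,
    ← Matrix.blockDiagonal_diagonal (fun k i => (((h k).eigenvalues i ^ t : ℝ) : ℂ)),
    ← Matrix.blockDiagonal_mul, ← Matrix.blockDiagonal_mul]
  exact congrArg Matrix.blockDiagonal (funext fun k => by
    rw [matRpow_eq' (h k) t, ← Matrix.star_eq_conjTranspose])

lemma matRpow_reindex' {m : Type*} [Fintype m] [DecidableEq m]
    (e : n ≃ m) (M : Matrix n n ℂ) (h : M.IsHermitian) (t : ℝ) :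
    matRpow (Matrix.reindex e e M) t = Matrix.reindex e e (matRpow M t) := by
  set U : Matrix n n ℂ := (h.eigenvectorUnitary : Matrix n n ℂ) with hU
  have key : ∀ d : n → ℝ,
      Matrix.reindex e e (U * Matrix.diagonal (fun i => ((d i : ℝ) : ℂ)) * star U)
        = (Matrix.reindex e e U) *
          Matrix.diagonal (fun j => ((d (e.symm j) : ℝ) : ℂ)) * star (Matrix.reindex e e U) := by
    intro d
    simp only [Matrix.reindex_apply, Matrix.star_eq_conjTranspose, Matrix.conjTranspose_submatrix]
    have hD : Matrix.diagonal (fun j => ((d (e.symm j) : ℝ) : ℂ))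
        = (Matrix.diagonal (fun i => ((d i : ℝ) : ℂ))).submatrix e.symm e.symm := by
      rw [Matrix.submatrix_diagonal_equiv]
      rfl
    rw [hD, Matrix.submatrix_mul_equiv, Matrix.submatrix_mul_equiv]
  have hdec : Matrix.reindex e e M
      = (Matrix.reindex e e U) *
        Matrix.diagonal (fun j => ((h.eigenvalues (e.symm j) : ℝ) : ℂ)) *
        star (Matrix.reindex e e U) := by
    rw [← key h.eigenvalues]
    congr 1
    exact h.spectral_theorem
  have hunit : (Matrix.reindex e e U) * star (Matrix.reindex e e U) = 1 := by
    simp only [Matrix.reindex_apply, Matrix.star_eq_conjTranspose, Matrix.conjTranspose_submatrix]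
    rw [Matrix.submatrix_mul_equiv, ← Matrix.star_eq_conjTranspose,
      eigen_mul_star h, Matrix.submatrix_one_equiv]
  rw [hdec, matRpow_eq_of_decomp _ hunit _ t, matRpow_eq' h t, key (fun i => h.eigenvalues i ^ t)]

lemma trace_reindex' {m : Type*} [Fintype m] [Fintype n]
    (e : n ≃ m) (M : Matrix n n ℂ) :
    (Matrix.reindex e e M).trace = M.trace := by
  simp only [Matrix.trace, Matrix.reindex_apply, Matrix.diag, Matrix.submatrix_apply]
  exact e.symm.sum_comp (fun i => M i i)

variable {R B' : Type*} [Fintype R] [Fintype B']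

lemma ptraceFst_isHermitian' (M : Matrix (R × B') (R × B') ℂ) (h : M.IsHermitian) :
    (ptraceFst M).IsHermitian := by
  rw [Matrix.IsHermitian]
  ext b b'
  simp only [Matrix.conjTranspose_apply, ptraceFst, Matrix.of_apply, star_sum]
  exact Finset.sum_congr rfl fun r _ => h.apply _ _

lemma ptraceFst_smul' (a : ℂ) (M : Matrix (R × B') (R × B') ℂ) :
    ptraceFst (a • M) = a • ptraceFst M := by
  ext b b'
  simp [ptraceFst, Finset.mul_sum]

lemma ptraceFst_posSemidef' [DecidableEq R] (M : Matrix (R × B') (R × B') ℂ)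
    (h : M.PosSemidef) : (ptraceFst M).PosSemidef := by
  refine Matrix.PosSemidef.of_dotProduct_mulVec_nonneg (ptraceFst_isHermitian' M h.1) fun y => ?_
  have key : star y ⬝ᵥ (ptraceFst M) *ᵥ y
      = ∑ r : R, star (fun p : R × B' => if p.1 = r then y p.2 else 0) ⬝ᵥ
          M *ᵥ (fun p : R × B' => if p.1 = r then y p.2 else 0) := by
    simp only [dotProduct, Matrix.mulVec, ptraceFst, Matrix.of_apply, Pi.star_apply,
      Fintype.sum_prod_type, apply_ite (star : ℂ → ℂ), star_zero, ite_mul, mul_ite, zero_mul,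
      mul_zero, Finset.sum_ite_irrel, Finset.sum_const_zero, Finset.sum_ite_eq',
      Finset.mem_univ, if_true]
    rw [Finset.sum_comm]
    refine Finset.sum_congr rfl fun b _ => ?_
    rw [← Finset.mul_sum]
    congr 1
    rw [Finset.sum_comm]
    exact Finset.sum_congr rfl fun b' _ => Finset.sum_mul _ _ _
  rw [key]
  exact Finset.sum_nonneg fun r _ => h.dotProduct_mulVec_nonneg _

/-- Auxiliary reassociation `(A × B) × X ≃ A × (X × B)` matching `blockDiagonal` indexing. -/
def cqAssoc2 (X A B : Type*) : (A × B) × X ≃ A × (X × B) where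
  toFun t := (t.1.1, (t.2, t.1.2))
  invFun t := ((t.1, t.2.2), t.2.1)
  left_inv _ := rfl
  right_inv _ := rfl

lemma ptraceFst_reindex_blockDiagonal' {X A B : Type*} [Fintype X] [DecidableEq X]
    [Fintype A] [Fintype B] (T : X → Matrix (A × B) (A × B) ℂ) :
    ptraceFst (Matrix.reindex (cqAssoc2 X A B) (cqAssoc2 X A B) (Matrix.blockDiagonal T))
      = Matrix.reindex (Equiv.prodComm B X) (Equiv.prodComm B X)
          (Matrix.blockDiagonal fun x => ptraceFst (T x)) := by
  ext ⟨x, b⟩ ⟨x', b'⟩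
  simp only [ptraceFst, Matrix.reindex_apply, Matrix.submatrix_apply, Matrix.of_apply,
    Matrix.blockDiagonal_apply, cqAssoc2, Equiv.coe_fn_symm_mk, Equiv.prodComm_symm,
    Equiv.prodComm_apply, Prod.swap_prod_mk]
  by_cases hxx : x = x' <;> simp [hxx]

end PetzAux

/-- Petz–Rényi coherent information of a classical–quantum state with the
classical register on the conditioning side:
`I_α(A⟩BX)_ρ = (α/(α−1)) log Σ_x p(x) Tr[(Tr_A[(ρ_AB^x)^α])^{1/α}]`. -/
theorem petzCohInfo_cq {X A B : Type*}
    [Fintype X] [DecidableEq X] [Fintype A] [DecidableEq A]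
    [Fintype B] [DecidableEq B]
    (p : X → ℝ) (hp : ∀ x, 0 ≤ p x) (hp1 : ∑ x, p x = 1)
    (ρ : X → Matrix (A × B) (A × B) ℂ)
    (hρ : ∀ x, (ρ x).PosSemidef) (hρtr : ∀ x, (ρ x).trace = 1)
    (α : ℝ) (hα : α ∈ Set.Ioo (0 : ℝ) 1 ∪ Set.Ioi (1 : ℝ)) :
    petzCohInfo α
        (Matrix.reindex (cqAssoc X A B) (cqAssoc X A B)
          (∑ x, (p x : ℂ) • (Matrix.single x x (1 : ℂ) ⊗ₖ ρ x))) =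
      (α / (α - 1)) *
        Real.logb 2
          (∑ x, p x * (matRpow (ptraceFst (matRpow (ρ x) α)) (1 / α)).trace.re)  := by
  have hα0 : α ≠ 0 := by
    rcases hα with h | h
    · exact ne_of_gt h.1
    · exact ne_of_gt (lt_trans one_pos h)
  set σ : X → Matrix (A × B) (A × B) ℂ := fun x => (p x : ℂ) • ρ x with hσdef
  have hσh : ∀ x, (σ x).IsHermitian := by
    intro x
    rw [Matrix.IsHermitian, Matrix.conjTranspose_smul, (hρ x).1.eq, Complex.star_def,
      Complex.conj_ofReal]
  have h1 : Matrix.reindex (cqAssoc X A B) (cqAssoc X A B)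
      (∑ x, (p x : ℂ) • (Matrix.single x x (1 : ℂ) ⊗ₖ ρ x))
      = Matrix.reindex (cqAssoc2 X A B) (cqAssoc2 X A B) (Matrix.blockDiagonal σ) := by
    ext ⟨a, x, b⟩ ⟨a', x', b'⟩
    simp only [Matrix.reindex_apply, Matrix.submatrix_apply, Matrix.sum_apply,
      Matrix.smul_apply, Matrix.kroneckerMap_apply, Matrix.single, Matrix.of_apply,
      Matrix.blockDiagonal_apply, cqAssoc, cqAssoc2, Equiv.coe_fn_symm_mk, smul_eq_mul, hσdef]
    by_cases hxx : x = x'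
    · subst hxx
      simp
    · have hz : ∀ y ∈ Finset.univ, (p y : ℂ) *
          ((if y = x ∧ y = x' then (1 : ℂ) else 0) * ρ y (a, b) (a', b')) = 0 := by
        intro y _
        have hny : ¬ (y = x ∧ y = x') := fun hy => hxx (hy.1 ▸ hy.2)
        rw [if_neg hny, zero_mul, mul_zero]
      rw [Finset.sum_eq_zero hz, if_neg hxx]
  rw [h1]
  have hblocks2 : ∀ x, (ptraceFst (matRpow (σ x) α)).IsHermitian := fun x =>
    ptraceFst_isHermitian' _ (matRpow_isHermitian' (hσh x) α)
  simp only [petzCohInfo]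
  rw [matRpow_reindex' (cqAssoc2 X A B) _ (isHermitian_blockDiagonal' σ hσh) α,
    matRpow_blockDiagonal' σ hσh α,
    ptraceFst_reindex_blockDiagonal' (fun x => matRpow (σ x) α),
    matRpow_reindex' (Equiv.prodComm B X) _ (isHermitian_blockDiagonal' _ hblocks2) (1 / α),
    matRpow_blockDiagonal' _ hblocks2 (1 / α),
    trace_reindex', Matrix.trace_blockDiagonal]
  have hper : ∀ x, matRpow (ptraceFst (matRpow (σ x) α)) (1 / α)
      = (p x : ℂ) • matRpow (ptraceFst (matRpow (ρ x) α)) (1 / α) := by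
    intro x
    have h2 : matRpow (σ x) α = ((p x ^ α : ℝ) : ℂ) • matRpow (ρ x) α :=
      matRpow_smul' (hρ x) (p x) (hp x) α
    have hpsd : (ptraceFst (matRpow (ρ x) α)).PosSemidef :=
      ptraceFst_posSemidef' _ (matRpow_posSemidef' (hρ x) α)
    rw [h2, ptraceFst_smul', matRpow_smul' hpsd _ (Real.rpow_nonneg (hp x) α) _]
    congr 2
    rw [← Real.rpow_mul (hp x), mul_one_div_cancel hα0, Real.rpow_one]
  have hsum : (∑ x, (matRpow (ptraceFst (matRpow (σ x) α)) (1 / α)).trace).re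
      = ∑ x, p x * (matRpow (ptraceFst (matRpow (ρ x) α)) (1 / α)).trace.re := by
    rw [Complex.re_sum]
    refine Finset.sum_congr rfl fun x _ => ?_
    rw [hper x, Matrix.trace_smul, smul_eq_mul, Complex.re_ofReal_mul]
  rw [hsum]
end

section
/- Every PPT bipartite state has low fidelity with the maximally entangled state: if ρ_AB is a density matrix on ℂ^d ⊗ ℂ^d whose partial transpose ρ^{T_B} is positive semidefinite, then ⟨Φ|ρ|Φ⟩ ≤ 1/d, where |Φ⟩ = (1/√d)Σ_i |ii⟩. -/
open Matrix BigOperators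
open scoped ComplexOrder

/-- Partial transpose on the second tensor factor:
`(A ⊗ B)^{T_B} = A ⊗ Bᵀ`, extended linearly. -/
def ptransposeSnd {A B : Type*}
    (M : Matrix (A × B) (A × B) ℂ) : Matrix (A × B) (A × B) ℂ :=
  Matrix.of fun p q => M (p.1, q.2) (q.1, p.2)

/-- The maximally entangled unit vector `|Φ⟩ = (1/√d) Σ_i |ii⟩`. -/
noncomputable def mesVec (d : ℕ) : Fin d × Fin d → ℂ :=
  fun p => if p.1 = p.2 then (1 / (Real.sqrt d : ℂ)) else 0

/-!
With `F` the flip operator, `⟨Φ|ρ|Φ⟩ = (1/d) Σ_{i,j} ρ_{ii,jj} = (1/d) Tr[F ρ^{T_B}]`. For a positive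
semidefinite `σ`, testing on `e_p - e_q` gives `2 Re σ_{pq} ≤ σ_{pp} + σ_{qq}`, so summing over
`q = π p` yields `Re Tr[P_π σ] ≤ Tr σ` for every permutation `π`. Applied to `σ = ρ^{T_B}` and `π` the
flip, and since the partial transpose preserves the trace, `Re Tr[F ρ^{T_B}] ≤ Tr ρ = 1`.
-/

namespace Matrix.PosSemidef

open RCLike

variable {𝕜 n : Type*} [RCLike 𝕜] [Fintype n] {M : Matrix n n 𝕜}

theorem two_mul_re_apply_le (hM : M.PosSemidef) (p q : n) :
    2 * re (M p q) ≤ re (M p p) + re (M q q) := by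
  classical
  set v : n → 𝕜 := Pi.single p 1 - Pi.single q 1
  have hquad : star v ⬝ᵥ M *ᵥ v = M p p - M p q - M q p + M q q := by
    simp [v, mulVec_sub, sub_dotProduct, dotProduct_sub]
    ring
  have hherm : M q p = star (M p q) := (hM.isHermitian.apply q p).symm
  have hnonneg := (nonneg_iff.mp (hM.dotProduct_mulVec_nonneg v)).1
  rw [hquad, hherm] at hnonneg
  simp only [map_add, map_sub, star_def, conj_re] at hnonneg
  linarith

theorem re_sum_apply_perm_le_re_trace (hM : M.PosSemidef) (π : Equiv.Perm n) :
    re (∑ p, M p (π p)) ≤ re M.trace := by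
  have hdiag : ∑ p, re (M (π p) (π p)) = ∑ p, re (M p p) :=
    Equiv.sum_comp π fun p => re (M p p)
  have hsum := Finset.sum_le_sum fun p (_ : p ∈ Finset.univ) => hM.two_mul_re_apply_le p (π p)
  rw [← Finset.mul_sum, Finset.sum_add_distrib, hdiag] at hsum
  simp only [trace, diag_apply, map_sum]
  linarith

end Matrix.PosSemidef

theorem trace_ptransposeSnd {A B : Type*} [Fintype A] [Fintype B]
    (M : Matrix (A × B) (A × B) ℂ) : (ptransposeSnd M).trace = M.trace := rfl

theorem sum_ptransposeSnd_apply_swap {A : Type*} [Fintype A] (M : Matrix (A × A) (A × A) ℂ) :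
    ∑ p, ptransposeSnd M p (Equiv.prodComm A A p) = ∑ i, ∑ j, M (i, i) (j, j) :=
  Fintype.sum_prod_type _

theorem star_mesVec_dotProduct_mulVec (d : ℕ) (M : Matrix (Fin d × Fin d) (Fin d × Fin d) ℂ) :
    star (mesVec d) ⬝ᵥ M *ᵥ mesVec d = (d : ℂ)⁻¹ * ∑ i, ∑ j, M (i, i) (j, j) := by
  have hsq : (Real.sqrt d : ℂ)⁻¹ * (Real.sqrt d : ℂ)⁻¹ = (d : ℂ)⁻¹ := by
    rw [← mul_inv, ← Complex.ofReal_mul, Real.mul_self_sqrt d.cast_nonneg, Complex.ofReal_natCast]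
  simp [dotProduct, mulVec, mesVec, Fintype.sum_prod_type, apply_ite (starRingEnd ℂ),
    Finset.mul_sum, ← hsq, mul_comm, mul_left_comm]

theorem ppt_fidelity_le_general (d : ℕ)
    (ρ : Matrix (Fin d × Fin d) (Fin d × Fin d) ℂ)
    (hρtr : ρ.trace = 1)
    (hppt : (ptransposeSnd ρ).PosSemidef) :
    (star (mesVec d) ⬝ᵥ ρ.mulVec (mesVec d)).re ≤ 1 / d := by
  have hflip := hppt.re_sum_apply_perm_le_re_trace (Equiv.prodComm _ _)
  rw [sum_ptransposeSnd_apply_swap, trace_ptransposeSnd, hρtr, RCLike.one_re,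
    RCLike.re_to_complex] at hflip
  rw [star_mesVec_dotProduct_mulVec, ← Complex.ofReal_natCast, ← Complex.ofReal_inv,
    Complex.re_ofReal_mul, one_div]
  exact mul_le_of_le_one_right (by positivity) hflip

/-- Every PPT state has fidelity at most `1/d` with the maximally entangled
state: if `ρ` is a state on `ℂ^d ⊗ ℂ^d` with positive semidefinite partial
transpose, then `⟨Φ|ρ|Φ⟩ ≤ 1/d`. -/
theorem ppt_fidelity_le (d : ℕ) (hd : 0 < d)
    (ρ : Matrix (Fin d × Fin d) (Fin d × Fin d) ℂ)
    (hρ : ρ.PosSemidef) (hρtr : ρ.trace = 1)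
    (hppt : (ptransposeSnd ρ).PosSemidef) :
    (star (mesVec d) ⬝ᵥ ρ.mulVec (mesVec d)).re ≤ 1 / d :=
  ppt_fidelity_le_general d ρ hρtr hppt
end
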